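/- arXiv:2508.18256 — 11 statements merged into one kernel-verified Lean document; each statement's English description precedes it below -/
import Mathlib

section
/- Let H be a bipartite instance in which every vertex of UD has at least one neighbor. Suppose u ∈ UD has d_H(u) = 1 and its unique neighbor is v ∈ UB. Then γ_p(H→UD) = 1 + γ_p(H' → UD'), where H' = H − N_H[v] is the instance with parts UB' = UB \ {v} and UD' = UD \ N_H(v); moreover, for every minimum UD'-PDS P' of H', the set {v} ∪ P' is a minimum UD-PDS of H. (Reduction Rule 1.) -/
/-- A `UD`-PDS of a bipartite instance with parts `UB`, `UD` and
neighborhood function `N`: a subset `P ⊆ UB` such that every vertex of `UD`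
has a neighbor in `P`. -/
def IsPDS {V : Type*} (UB UD : Finset V) (N : V → Finset V) (P : Finset V) : Prop :=
  P ⊆ UB ∧ ∀ u ∈ UD, ∃ w ∈ P, w ∈ N u

/-- `γ_p(H → UD)`: the minimum cardinality of a `UD`-PDS. -/
noncomputable def gammaP {V : Type*} (UB UD : Finset V) (N : V → Finset V) : ℕ :=
  sInf {k | ∃ P : Finset V, IsPDS UB UD N P ∧ P.card = k}

/-- **Reduction Rule 1.** If `u ∈ UD` has degree 1 with unique neighbor `v ∈ UB`,
then `γ_p(H→UD) = 1 + γ_p((H − N[v]) → UD \ N(v))`, and adding `v` to any minimum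
PDS of the reduced instance gives a minimum `UD`-PDS of `H`. -/
theorem rule1 {V : Type*} [DecidableEq V]
    (UB UD : Finset V) (N : V → Finset V)
    (hdisj : Disjoint UB UD)
    (hsymm : ∀ a b : V, a ∈ N b ↔ b ∈ N a)
    (hbip : ∀ a b : V, b ∈ N a → (a ∈ UB ∧ b ∈ UD) ∨ (a ∈ UD ∧ b ∈ UB))
    (hdeg : ∀ u ∈ UD, (N u).Nonempty)
    (u v : V) (hu : u ∈ UD) (hv : v ∈ UB) (hNu : N u = {v}) :
    gammaP UB UD N
        = 1 + gammaP (UB \ insert v (N v)) (UD \ insert v (N v))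
            (fun w => N w \ insert v (N v)) ∧
    ∀ P' : Finset V,
      IsPDS (UB \ insert v (N v)) (UD \ insert v (N v))
          (fun w => N w \ insert v (N v)) P' →
      P'.card = gammaP (UB \ insert v (N v)) (UD \ insert v (N v))
          (fun w => N w \ insert v (N v)) →
      IsPDS UB UD N (insert v P') ∧ (insert v P').card = gammaP UB UD N := by
  classical
  have hUBnotUD : ∀ x ∈ UB, x ∉ UD := fun x hx => Finset.disjoint_left.mp hdisj hx
  have hNvUD : ∀ x ∈ N v, x ∈ UD := by
    intro x hx
    rcases hbip v x hx with ⟨_, h⟩ | ⟨h, _⟩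
    · exact h
    · exact absurd h (hUBnotUD v hv)
  have hNuUB : ∀ w ∈ UD, ∀ x ∈ N w, x ∈ UB := by
    intro w hw x hx
    rcases hbip w x hx with ⟨h, _⟩ | ⟨_, h⟩
    · exact absurd hw (hUBnotUD w h)
    · exact h
  have hUB_S : ∀ x ∈ UB, x ∈ insert v (N v) → x = v := by
    intro x hx hxS
    rcases Finset.mem_insert.mp hxS with h | h
    · exact h
    · exact absurd (hNvUD x h) (hUBnotUD x hx)
  -- forward direction: inserting v into a PDS of the reduced instance
  have hfwd : ∀ P', IsPDS (UB \ insert v (N v)) (UD \ insert v (N v))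
      (fun w => N w \ insert v (N v)) P' →
      IsPDS UB UD N (insert v P') ∧ (insert v P').card = P'.card + 1 := by
    rintro P' ⟨hP'sub, hP'dom⟩
    have hvnot : v ∉ P' := by
      intro h
      exact (Finset.mem_sdiff.mp (hP'sub h)).2 (Finset.mem_insert_self v (N v))
    refine ⟨⟨?_, ?_⟩, by rw [Finset.card_insert_of_notMem hvnot]⟩
    · intro x hx
      rcases Finset.mem_insert.mp hx with h | h
      · exact h ▸ hv
      · exact (Finset.mem_sdiff.mp (hP'sub h)).1
    · intro w hw
      by_cases hwS : w ∈ insert v (N v)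
      · rcases Finset.mem_insert.mp hwS with h | h
        · subst h; exact absurd hw (hUBnotUD w hv)
        · exact ⟨v, Finset.mem_insert_self _ _, (hsymm w v).mp h⟩
      · obtain ⟨x, hxP', hxN⟩ := hP'dom w (Finset.mem_sdiff.mpr ⟨hw, hwS⟩)
        exact ⟨x, Finset.mem_insert_of_mem hxP', (Finset.mem_sdiff.mp hxN).1⟩
  -- backward direction: a PDS of H contains v, and erasing v gives a PDS of H'
  have hbwd : ∀ P, IsPDS UB UD N P →
      v ∈ P ∧ IsPDS (UB \ insert v (N v)) (UD \ insert v (N v))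
        (fun w => N w \ insert v (N v)) (P.erase v) := by
    rintro P ⟨hPsub, hPdom⟩
    have hvP : v ∈ P := by
      obtain ⟨x, hxP, hxN⟩ := hPdom u hu
      rw [hNu, Finset.mem_singleton] at hxN
      exact hxN ▸ hxP
    refine ⟨hvP, ?_, ?_⟩
    · intro x hx
      have hxP := Finset.mem_of_mem_erase hx
      refine Finset.mem_sdiff.mpr ⟨hPsub hxP, fun hxS => ?_⟩
      exact (Finset.ne_of_mem_erase hx) (hUB_S x (hPsub hxP) hxS)
    · intro w hw
      obtain ⟨hwUD, hwS⟩ := Finset.mem_sdiff.mp hw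
      obtain ⟨x, hxP, hxN⟩ := hPdom w hwUD
      have hxUB := hNuUB w hwUD x hxN
      have hxne : x ≠ v := by
        rintro rfl
        exact hwS (Finset.mem_insert_of_mem ((hsymm x w).mp hxN))
      refine ⟨x, Finset.mem_erase.mpr ⟨hxne, hxP⟩,
        Finset.mem_sdiff.mpr ⟨hxN, fun hxS => ?_⟩⟩
      rcases Finset.mem_insert.mp hxS with h | h
      · exact hxne h
      · exact hUBnotUD x hxUB (hNvUD x h)
  -- UB itself is a PDS, so the sets defining the infima are nonempty
  have hUBPDS : IsPDS UB UD N UB := by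
    refine ⟨le_refl _, fun w hw => ?_⟩
    obtain ⟨x, hx⟩ := hdeg w hw
    exact ⟨x, hNuUB w hw x hx, hx⟩
  have hA : {k | ∃ P : Finset V, IsPDS UB UD N P ∧ P.card = k}.Nonempty :=
    ⟨UB.card, UB, hUBPDS, rfl⟩
  have hA' : {k | ∃ P : Finset V, IsPDS (UB \ insert v (N v)) (UD \ insert v (N v))
      (fun w => N w \ insert v (N v)) P ∧ P.card = k}.Nonempty :=
    ⟨(UB.erase v).card, UB.erase v, (hbwd UB hUBPDS).2, rfl⟩
  obtain ⟨Pm, hPm, hPmc⟩ := Nat.sInf_mem hA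
  obtain ⟨Pm', hPm', hPmc'⟩ := Nat.sInf_mem hA'
  obtain ⟨hvPm, hPmE⟩ := hbwd Pm hPm
  obtain ⟨hIns, hInsCard⟩ := hfwd Pm' hPm'
  have hPmc2 : Pm.card = gammaP UB UD N := hPmc
  have hPmc2' : Pm'.card = gammaP (UB \ insert v (N v)) (UD \ insert v (N v))
      (fun w => N w \ insert v (N v)) := hPmc'
  have hg1 : gammaP UB UD N ≤ 1 + gammaP (UB \ insert v (N v)) (UD \ insert v (N v))
      (fun w => N w \ insert v (N v)) := by
    refine Nat.sInf_le ⟨insert v Pm', hIns, ?_⟩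
    rw [hInsCard, hPmc2']
    omega
  have hg2 : gammaP (UB \ insert v (N v)) (UD \ insert v (N v))
      (fun w => N w \ insert v (N v)) ≤ (Pm.erase v).card :=
    Nat.sInf_le ⟨Pm.erase v, hPmE, rfl⟩
  have hcardE : (Pm.erase v).card = Pm.card - 1 := Finset.card_erase_of_mem hvPm
  have hPmpos : 1 ≤ Pm.card := Finset.card_pos.mpr ⟨v, hvPm⟩
  have heq : gammaP UB UD N = 1 + gammaP (UB \ insert v (N v)) (UD \ insert v (N v))
      (fun w => N w \ insert v (N v)) := by
    omega
  refine ⟨heq, fun P' hP' hP'card => ?_⟩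
  obtain ⟨hI, hIc⟩ := hfwd P' hP'
  exact ⟨hI, by rw [hIc, hP'card]; omega⟩
end

section
/- Let H be a bipartite instance in which every vertex of UD has at least one neighbor. Suppose u ∈ UB has d_H(u) = 1, and the unique neighbor w ∈ UD of u satisfies d_H(w) ≥ 2. Then γ_p(H→UD) = γ_p((H − u)→UD); in particular, H has a minimum UD-PDS that does not contain u. (Reduction Rule 2.) -/
/-- **Reduction Rule 2.** If `u ∈ UB` has degree 1 and its unique neighbor
`w ∈ UD` has degree at least 2, then `γ_p(H→UD) = γ_p((H − u)→UD)`; in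
particular `H` has a minimum `UD`-PDS not containing `u`. -/
theorem rule2 {V : Type*} [DecidableEq V]
    (UB UD : Finset V) (N : V → Finset V)
    (hdisj : Disjoint UB UD)
    (hsymm : ∀ a b : V, a ∈ N b ↔ b ∈ N a)
    (hbip : ∀ a b : V, b ∈ N a → (a ∈ UB ∧ b ∈ UD) ∨ (a ∈ UD ∧ b ∈ UB))
    (hdeg : ∀ x ∈ UD, (N x).Nonempty)
    (u w : V) (hu : u ∈ UB) (hw : w ∈ UD) (hNu : N u = {w}) (hdw : 2 ≤ (N w).card) :
    gammaP UB UD N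
        = gammaP (UB \ {u}) (UD \ {u}) (fun x => N x \ {u}) ∧
    ∃ P : Finset V, IsPDS UB UD N P ∧ P.card = gammaP UB UD N ∧ u ∉ P := by
  have huD : u ∉ UD := fun h => (Finset.disjoint_left.mp hdisj hu) h
  -- from any PDS, get a PDS avoiding u of at most the same size
  have avoid : ∀ P : Finset V, IsPDS UB UD N P →
      ∃ Q : Finset V, IsPDS UB UD N Q ∧ u ∉ Q ∧ Q.card ≤ P.card := by
    intro P hP
    by_cases huP : u ∈ P
    · -- pick v ∈ N w, v ≠ u
      have hne : (N w \ {u}).Nonempty := by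
        rw [← Finset.card_pos]
        have h1 := Finset.card_le_card_sdiff_add_card (s := N w) (t := {u})
        simp only [Finset.card_singleton] at h1
        omega
      obtain ⟨v, hv⟩ := hne
      have hvw : v ∈ N w := (Finset.mem_sdiff.mp hv).1
      have hvu : v ≠ u := by
        have := (Finset.mem_sdiff.mp hv).2; simpa using this
      have hvB : v ∈ UB := by
        rcases hbip w v hvw with ⟨h1, h2⟩ | ⟨h1, h2⟩
        · exact absurd h1 (Finset.disjoint_right.mp hdisj hw)
        · exact h2
      refine ⟨insert v (P.erase u), ⟨?_, ?_⟩, ?_, ?_⟩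
      · intro x hx
        rcases Finset.mem_insert.mp hx with rfl | hx
        · exact hvB
        · exact hP.1 (Finset.mem_of_mem_erase hx)
      · intro x hx
        obtain ⟨p, hpP, hpx⟩ := hP.2 x hx
        by_cases hpu : p = u
        · subst hpu
          have hxw : x ∈ N p := (hsymm x p).mpr hpx
          rw [hNu] at hxw
          have : x = w := by simpa using hxw
          subst this
          exact ⟨v, Finset.mem_insert_self _ _, hvw⟩
        · exact ⟨p, Finset.mem_insert_of_mem (Finset.mem_erase.mpr ⟨hpu, hpP⟩), hpx⟩
      · simp [hvu, Ne.symm hvu]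
      · calc (insert v (P.erase u)).card ≤ (P.erase u).card + 1 :=
              Finset.card_insert_le _ _
          _ = P.card := by
              have : 1 ≤ P.card := Finset.card_pos.mpr ⟨u, huP⟩
              rw [Finset.card_erase_of_mem huP]; omega
    · exact ⟨P, hP, huP, le_rfl⟩
  -- PDS avoiding u ↔ PDS of reduced instance
  have fwd : ∀ P : Finset V, IsPDS UB UD N P → u ∉ P →
      IsPDS (UB \ {u}) (UD \ {u}) (fun x => N x \ {u}) P := by
    intro P hP huP
    constructor
    · intro x hx
      exact Finset.mem_sdiff.mpr ⟨hP.1 hx, by simp; rintro rfl; exact huP hx⟩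
    · intro x hx
      obtain ⟨p, hpP, hpx⟩ := hP.2 x (Finset.mem_sdiff.mp hx).1
      exact ⟨p, hpP, Finset.mem_sdiff.mpr ⟨hpx, by simp; rintro rfl; exact huP hpP⟩⟩
  have bwd : ∀ P : Finset V, IsPDS (UB \ {u}) (UD \ {u}) (fun x => N x \ {u}) P →
      IsPDS UB UD N P := by
    intro P hP
    constructor
    · intro x hx
      exact (Finset.mem_sdiff.mp (hP.1 hx)).1
    · intro x hx
      have hx' : x ∈ UD \ {u} := Finset.mem_sdiff.mpr ⟨hx, by simp; rintro rfl; exact huD hx⟩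
      obtain ⟨p, hpP, hpx⟩ := hP.2 x hx'
      exact ⟨p, hpP, (Finset.mem_sdiff.mp hpx).1⟩
  -- nonempty of the PDS-cardinality set
  have hUBpds : IsPDS UB UD N UB := by
    refine ⟨le_rfl, fun x hx => ?_⟩
    obtain ⟨y, hy⟩ := hdeg x hx
    have hyB : y ∈ UB := by
      rcases hbip x y hy with ⟨h1, _⟩ | ⟨_, h2⟩
      · exact absurd h1 (Finset.disjoint_right.mp hdisj hx)
      · exact h2
    exact ⟨y, hyB, hy⟩
  have hSne : {k | ∃ P : Finset V, IsPDS UB UD N P ∧ P.card = k}.Nonempty :=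
    ⟨UB.card, UB, hUBpds, rfl⟩
  obtain ⟨P0, hP0, hP0card⟩ := Nat.sInf_mem hSne
  obtain ⟨Q, hQ, hQu, hQcard⟩ := avoid P0 hP0
  have hQge : gammaP UB UD N ≤ Q.card := Nat.sInf_le ⟨Q, hQ, rfl⟩
  have hQeq : Q.card = gammaP UB UD N := le_antisymm (hQcard.trans_eq hP0card) hQge
  constructor
  · apply le_antisymm
    · -- any PDS of reduced is a PDS of H
      have hS'ne : {k | ∃ P : Finset V,
          IsPDS (UB \ {u}) (UD \ {u}) (fun x => N x \ {u}) P ∧ P.card = k}.Nonempty :=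
        ⟨Q.card, Q, fwd Q hQ hQu, rfl⟩
      obtain ⟨P1, hP1, hP1card⟩ := Nat.sInf_mem hS'ne
      calc gammaP UB UD N ≤ P1.card := Nat.sInf_le ⟨P1, bwd P1 hP1, rfl⟩
        _ = _ := hP1card
    · calc gammaP (UB \ {u}) (UD \ {u}) (fun x => N x \ {u}) ≤ Q.card :=
            Nat.sInf_le ⟨Q, fwd Q hQ hQu, rfl⟩
        _ = gammaP UB UD N := hQeq
  · exact ⟨Q, hQ, hQeq, hQu⟩
end

section
/- Let H be a bipartite instance in which every vertex of UD has at least one neighbor. Suppose u₁, u₂ ∈ UB are distinct vertices with N_H(u₁) ⊆ N_H(u₂). Then γ_p(H→UD) = γ_p((H − u₁)→UD); in particular, H has a minimum UD-PDS that does not contain u₁. (Reduction Rule 3.) -/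
/-- **Reduction Rule 3.** If `u₁, u₂ ∈ UB` are distinct with `N(u₁) ⊆ N(u₂)`,
then `γ_p(H→UD) = γ_p((H − u₁)→UD)`; in particular `H` has a minimum `UD`-PDS
not containing `u₁`. -/
theorem rule3 {V : Type*} [DecidableEq V]
    (UB UD : Finset V) (N : V → Finset V)
    (hdisj : Disjoint UB UD)
    (hsymm : ∀ a b : V, a ∈ N b ↔ b ∈ N a)
    (hbip : ∀ a b : V, b ∈ N a → (a ∈ UB ∧ b ∈ UD) ∨ (a ∈ UD ∧ b ∈ UB))
    (hdeg : ∀ x ∈ UD, (N x).Nonempty)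
    (u₁ u₂ : V) (hu₁ : u₁ ∈ UB) (hu₂ : u₂ ∈ UB) (hne : u₁ ≠ u₂)
    (hsub : N u₁ ⊆ N u₂) :
    gammaP UB UD N
        = gammaP (UB \ {u₁}) (UD \ {u₁}) (fun x => N x \ {u₁}) ∧
    ∃ P : Finset V, IsPDS UB UD N P ∧ P.card = gammaP UB UD N ∧ u₁ ∉ P := by
  classical
  have hne' : ∀ u ∈ UD, u ≠ u₁ := by
    rintro u hu rfl
    exact Finset.disjoint_left.mp hdisj hu₁ hu
  -- UB itself is a PDS
  have hUBpds : IsPDS UB UD N UB := by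
    refine ⟨Finset.Subset.refl _, fun u hu => ?_⟩
    obtain ⟨b, hb⟩ := hdeg u hu
    rcases hbip u b hb with ⟨h1, _⟩ | ⟨_, h2⟩
    · exact absurd hu (Finset.disjoint_left.mp hdisj h1)
    · exact ⟨b, h2, hb⟩
  -- swapping u₁ for u₂ gives a PDS of the reduced instance
  have swap : ∀ P : Finset V, IsPDS UB UD N P →
      ∃ Q : Finset V, IsPDS (UB \ {u₁}) (UD \ {u₁}) (fun x => N x \ {u₁}) Q ∧
        Q.card ≤ P.card := by
    rintro P ⟨hPsub, hPdom⟩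
    by_cases h1 : u₁ ∈ P
    · refine ⟨insert u₂ (P.erase u₁), ⟨?_, ?_⟩, ?_⟩
      · intro x hx
        rcases Finset.mem_insert.mp hx with rfl | hx
        · exact Finset.mem_sdiff.mpr ⟨hu₂, by simp [Ne.symm hne]⟩
        · exact Finset.mem_sdiff.mpr ⟨hPsub (Finset.mem_of_mem_erase hx),
            by simp [Finset.ne_of_mem_erase hx]⟩
      · intro u hu
        have hu' := (Finset.mem_sdiff.mp hu).1
        obtain ⟨w, hwP, hwN⟩ := hPdom u hu'
        by_cases hw : w = u₁
        · subst hw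
          have hNu2 : u ∈ N u₂ := hsub ((hsymm _ _).mp hwN)
          exact ⟨u₂, Finset.mem_insert_self _ _,
            Finset.mem_sdiff.mpr ⟨(hsymm _ _).mp hNu2, by simp [Ne.symm hne]⟩⟩
        · exact ⟨w, Finset.mem_insert_of_mem (Finset.mem_erase.mpr ⟨hw, hwP⟩),
            Finset.mem_sdiff.mpr ⟨hwN, by simp [hw]⟩⟩
      · calc (insert u₂ (P.erase u₁)).card ≤ (P.erase u₁).card + 1 :=
              Finset.card_insert_le _ _
          _ = P.card := Finset.card_erase_add_one h1
    · refine ⟨P, ⟨?_, ?_⟩, le_refl _⟩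
      · intro x hx
        refine Finset.mem_sdiff.mpr ⟨hPsub hx, by simp; rintro rfl; exact h1 hx⟩
      · intro u hu
        obtain ⟨w, hw, hwN⟩ := hPdom u (Finset.mem_sdiff.mp hu).1
        exact ⟨w, hw, Finset.mem_sdiff.mpr ⟨hwN, by simp; rintro rfl; exact h1 hw⟩⟩
  -- a PDS of the reduced instance is a PDS of the original
  have back : ∀ P : Finset V,
      IsPDS (UB \ {u₁}) (UD \ {u₁}) (fun x => N x \ {u₁}) P → IsPDS UB UD N P := by
    rintro P ⟨hPsub, hPdom⟩
    refine ⟨fun x hx => (Finset.mem_sdiff.mp (hPsub hx)).1, fun u hu => ?_⟩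
    have hu' : u ∈ UD \ {u₁} := Finset.mem_sdiff.mpr ⟨hu, by simp [hne' u hu]⟩
    obtain ⟨w, hw, hwN⟩ := hPdom u hu'
    exact ⟨w, hw, (Finset.mem_sdiff.mp hwN).1⟩
  have hSne : {k | ∃ P : Finset V, IsPDS UB UD N P ∧ P.card = k}.Nonempty :=
    ⟨UB.card, UB, hUBpds, rfl⟩
  obtain ⟨P, hP, hPcard⟩ := Nat.sInf_mem hSne
  obtain ⟨Q, hQ, hQle⟩ := swap P hP
  have hS'ne : {k | ∃ P : Finset V,
      IsPDS (UB \ {u₁}) (UD \ {u₁}) (fun x => N x \ {u₁}) P ∧ P.card = k}.Nonempty :=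
    ⟨Q.card, Q, hQ, rfl⟩
  obtain ⟨Q', hQ', hQ'card⟩ := Nat.sInf_mem hS'ne
  have hg'le : gammaP (UB \ {u₁}) (UD \ {u₁}) (fun x => N x \ {u₁}) ≤ gammaP UB UD N := by
    unfold gammaP
    exact le_trans (Nat.sInf_le ⟨Q, hQ, rfl⟩) (hPcard ▸ hQle)
  have hgle : gammaP UB UD N ≤ gammaP (UB \ {u₁}) (UD \ {u₁}) (fun x => N x \ {u₁}) := by
    unfold gammaP
    exact hQ'card ▸ Nat.sInf_le ⟨Q', back Q' hQ', rfl⟩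
  have heq := le_antisymm hgle hg'le
  refine ⟨heq, Q', back Q' hQ', by rw [heq]; exact hQ'card, fun h => ?_⟩
  have := hQ'.1 h
  simp at this
end

section
/- Let H be a bipartite instance in which every vertex of UD has at least one neighbor. Suppose u₁, u₂ ∈ UD are distinct vertices with N_H(u₁) ⊆ N_H(u₂). Then γ_p(H→UD) = γ_p((H − u₂)→(UD \ {u₂})); in fact, a set P ⊆ UB is a UD-PDS of H if and only if it is a (UD \ {u₂})-PDS of H − u₂. (Reduction Rule 4.) -/
/-- **Reduction Rule 4.** If `u₁, u₂ ∈ UD` are distinct with `N(u₁) ⊆ N(u₂)`,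
then `γ_p(H→UD) = γ_p((H − u₂)→(UD \ {u₂}))`; in fact a set `P ⊆ UB` is a
`UD`-PDS of `H` iff it is a `(UD \ {u₂})`-PDS of `H − u₂`. -/
theorem rule4 {V : Type*} [DecidableEq V]
    (UB UD : Finset V) (N : V → Finset V)
    (hdisj : Disjoint UB UD)
    (hsymm : ∀ a b : V, a ∈ N b ↔ b ∈ N a)
    (hbip : ∀ a b : V, b ∈ N a → (a ∈ UB ∧ b ∈ UD) ∨ (a ∈ UD ∧ b ∈ UB))
    (hdeg : ∀ x ∈ UD, (N x).Nonempty)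
    (u₁ u₂ : V) (hu₁ : u₁ ∈ UD) (hu₂ : u₂ ∈ UD) (hne : u₁ ≠ u₂)
    (hsub : N u₁ ⊆ N u₂) :
    gammaP UB UD N
        = gammaP (UB \ {u₂}) (UD \ {u₂}) (fun x => N x \ {u₂}) ∧
    ∀ P : Finset V,
      IsPDS UB UD N P ↔ IsPDS (UB \ {u₂}) (UD \ {u₂}) (fun x => N x \ {u₂}) P := by
  have hu₂B : u₂ ∉ UB := fun h => (Finset.disjoint_left.mp hdisj h) hu₂
  have key : ∀ P : Finset V,
      IsPDS UB UD N P ↔ IsPDS (UB \ {u₂}) (UD \ {u₂}) (fun x => N x \ {u₂}) P := by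
    intro P
    constructor
    · rintro ⟨hPB, hdom⟩
      refine ⟨fun w hw => Finset.mem_sdiff.mpr ⟨hPB hw, by
        simp only [Finset.mem_singleton]; rintro rfl; exact hu₂B (hPB hw)⟩, ?_⟩
      intro u hu
      obtain ⟨hu', _⟩ := Finset.mem_sdiff.mp hu
      obtain ⟨w, hwP, hwN⟩ := hdom u hu'
      refine ⟨w, hwP, Finset.mem_sdiff.mpr ⟨hwN, ?_⟩⟩
      simp only [Finset.mem_singleton]; rintro rfl; exact hu₂B (hPB hwP)
    · rintro ⟨hPB, hdom⟩
      refine ⟨fun w hw => (Finset.mem_sdiff.mp (hPB hw)).1, ?_⟩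
      intro u hu
      by_cases h : u = u₂
      · subst h
        obtain ⟨w, hwP, hwN⟩ := hdom u₁ (Finset.mem_sdiff.mpr ⟨hu₁, by
          simpa using hne⟩)
        exact ⟨w, hwP, hsub (Finset.mem_sdiff.mp hwN).1⟩
      · obtain ⟨w, hwP, hwN⟩ := hdom u (Finset.mem_sdiff.mpr ⟨hu, by simpa using h⟩)
        exact ⟨w, hwP, (Finset.mem_sdiff.mp hwN).1⟩
  refine ⟨?_, key⟩
  unfold gammaP
  congr 1
  ext k
  simp only [Set.mem_setOf_eq]
  constructor
  · rintro ⟨P, hP, rfl⟩; exact ⟨P, (key P).mp hP, rfl⟩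
  · rintro ⟨P, hP, rfl⟩; exact ⟨P, (key P).mpr hP, rfl⟩
end

section
/- Let H be a bipartite instance in which every vertex of UD has at least one neighbor. Suppose u ∈ UD has N_H(u) = {u₁, u₂} with u₁ ≠ u₂ in UB, d_H(u₁) = d_H(u₂) = 2, N_H(u₁) = {u, v₁}, N_H(u₂) = {u, v₂}, where v₁, v₂ are distinct vertices of UD different from u, and N_H({v₁, v₂}) \ {u₁, u₂} ≠ ∅. Let H' = iden_{H − N_H[u]}({v₁, v₂}) with identified vertex v (placed in the UD-part UD' of H'). Then γ_p(H→UD) = γ_p(H'→UD') + 1. Moreover, for any minimum UD'-PDS D' of H': if some vertex of D' is adjacent in H to v₁ then {u₂} ∪ D' is a minimum UD-PDS of H, and otherwise {u₁} ∪ D' is a minimum UD-PDS of H. (Reduction Rule 5.) -/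
/-- **Reduction Rule 5.** Let `u ∈ UD` with `N(u) = {u₁, u₂}`, where
`u₁, u₂ ∈ UB` both have degree 2, `N(u₁) = {u, v₁}`, `N(u₂) = {u, v₂}`, with
`v₁, v₂ ∈ UD` distinct and different from `u`, and
`N({v₁, v₂}) \ {u₁, u₂} ≠ ∅`.  Let `H' = iden_{H − N[u]}({v₁, v₂})` with fresh
identified vertex `v` placed in the `UD`-part `UD'`.  Here `H − N[u]` deletes
`S = {u, u₁, u₂}`, so `UB' = UB \ S`, `UD' = insert v ((UD \ S) \ {v₁, v₂})`,
and the neighborhood function `N'` is as described by identification.  Then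
`γ_p(H→UD) = γ_p(H'→UD') + 1`, and for every minimum `UD'`-PDS `D'` of `H'`:
if some vertex of `D'` is adjacent in `H` to `v₁` then `{u₂} ∪ D'` is a minimum
`UD`-PDS of `H`, and otherwise `{u₁} ∪ D'` is a minimum `UD`-PDS of `H`. -/
theorem rule5 {V : Type*} [DecidableEq V]
    (UB UD : Finset V) (N : V → Finset V)
    (hdisj : Disjoint UB UD)
    (hsymm : ∀ a b : V, a ∈ N b ↔ b ∈ N a)
    (hbip : ∀ a b : V, b ∈ N a → (a ∈ UB ∧ b ∈ UD) ∨ (a ∈ UD ∧ b ∈ UB))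
    (hdeg : ∀ x ∈ UD, (N x).Nonempty)
    (u u₁ u₂ v₁ v₂ v : V)
    (hu : u ∈ UD) (hu₁ : u₁ ∈ UB) (hu₂ : u₂ ∈ UB) (hu₁₂ : u₁ ≠ u₂)
    (hNu : N u = {u₁, u₂})
    (hd₁ : (N u₁).card = 2) (hd₂ : (N u₂).card = 2)
    (hNu₁ : N u₁ = {u, v₁}) (hNu₂ : N u₂ = {u, v₂})
    (hv₁ : v₁ ∈ UD) (hv₂ : v₂ ∈ UD) (hv₁₂ : v₁ ≠ v₂) (hv₁u : v₁ ≠ u) (hv₂u : v₂ ≠ u)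
    (hout : (((N v₁ ∪ N v₂) \ {v₁, v₂}) \ {u₁, u₂}).Nonempty)
    (hvfresh : v ∉ UB ∪ UD)
    -- the identified instance `H'`
    (UB' UD' : Finset V) (N' : V → Finset V)
    (hUB' : UB' = UB \ ({u, u₁, u₂} : Finset V))
    (hUD' : UD' = insert v ((UD \ ({u, u₁, u₂} : Finset V)) \ {v₁, v₂}))
    (hN' : ∀ x : V, N' x =
      if x = v then (N v₁ \ ({u, u₁, u₂} : Finset V)) ∪ (N v₂ \ ({u, u₁, u₂} : Finset V))
      else if x ∈ (N v₁ \ ({u, u₁, u₂} : Finset V)) ∪ (N v₂ \ ({u, u₁, u₂} : Finset V))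
        then insert v ((N x \ ({u, u₁, u₂} : Finset V)) \ {v₁, v₂})
        else (N x \ ({u, u₁, u₂} : Finset V)) \ {v₁, v₂}) :
    gammaP UB UD N = gammaP UB' UD' N' + 1 ∧
    ∀ D' : Finset V, IsPDS UB' UD' N' D' → D'.card = gammaP UB' UD' N' →
      ((∃ w ∈ D', w ∈ N v₁) →
        IsPDS UB UD N (insert u₂ D') ∧ (insert u₂ D').card = gammaP UB UD N) ∧
      (¬ (∃ w ∈ D', w ∈ N v₁) →
        IsPDS UB UD N (insert u₁ D') ∧ (insert u₁ D').card = gammaP UB UD N) := by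
  classical
  set S : Finset V := {u, u₁, u₂} with hS
  have hmemS : ∀ x : V, x ∈ S ↔ x = u ∨ x = u₁ ∨ x = u₂ := by
    intro x; simp [hS]
  have hdl : ∀ x ∈ UB, x ∉ UD := fun x hx => Finset.disjoint_left.mp hdisj hx
  have hNsub : ∀ x ∈ UD, N x ⊆ UB := by
    intro x hx w hw
    rcases hbip x w hw with h | h
    · exact absurd hx (hdl x h.1)
    · exact h.2
  have huUB : u ∉ UB := fun h => hdl u h hu
  have hv₁UB : v₁ ∉ UB := fun h => hdl v₁ h hv₁
  have hv₂UB : v₂ ∉ UB := fun h => hdl v₂ h hv₂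
  have hvUB : v ∉ UB := fun h => hvfresh (Finset.mem_union_left _ h)
  have hvUD : v ∉ UD := fun h => hvfresh (Finset.mem_union_right _ h)
  have hu₂u : u₂ ∈ N u := by rw [hNu]; simp
  have hv₁Nu₁ : v₁ ∈ N u₁ := by rw [hNu₁]; simp
  have hv₂Nu₂ : v₂ ∈ N u₂ := by rw [hNu₂]; simp
  have hu₁Nv₁ : u₁ ∈ N v₁ := (hsymm v₁ u₁).mp hv₁Nu₁
  have hu₂Nv₂ : u₂ ∈ N v₂ := (hsymm v₂ u₂).mp hv₂Nu₂
  have hu₂notNv₁ : u₂ ∉ N v₁ := by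
    intro h
    have h2 : v₁ ∈ N u₂ := (hsymm u₂ v₁).mp h
    rw [hNu₂] at h2
    simp only [Finset.mem_insert, Finset.mem_singleton] at h2
    rcases h2 with h2 | h2
    · exact hv₁u h2
    · exact hv₁₂ h2
  have hu₁notNv₂ : u₁ ∉ N v₂ := by
    intro h
    have h2 : v₂ ∈ N u₁ := (hsymm u₁ v₂).mp h
    rw [hNu₁] at h2
    simp only [Finset.mem_insert, Finset.mem_singleton] at h2
    rcases h2 with h2 | h2
    · exact hv₂u h2
    · exact hv₁₂ h2.symm
  have hu₁u : u₁ ∈ N u := by rw [hNu]; simp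
  have hu₁Nv₁' := hu₁Nv₁
  have hUB'sub : UB' ⊆ UB := by rw [hUB']; exact Finset.sdiff_subset
  -- domination of ordinary UD-vertices in H by a H'-PDS
  have hdomback : ∀ (D' : Finset V), D' ⊆ UB' → (∀ x ∈ UD', ∃ w ∈ D', w ∈ N' x) →
      ∀ x ∈ UD, x ≠ u → x ≠ v₁ → x ≠ v₂ → ∃ w ∈ D', w ∈ N x := by
    intro D' hsub hdom x hx hxu hxv₁ hxv₂
    have hxS : x ∉ S := by
      rw [hmemS]; push_neg
      exact ⟨hxu, fun h => hdl u₁ hu₁ (h ▸ hx), fun h => hdl u₂ hu₂ (h ▸ hx)⟩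
    have hxUD' : x ∈ UD' := by
      rw [hUD']
      refine Finset.mem_insert_of_mem ?_
      simp only [Finset.mem_sdiff]
      exact ⟨⟨hx, hxS⟩, by simp [hxv₁, hxv₂]⟩
    obtain ⟨p, hpD, hpN⟩ := hdom x hxUD'
    have hpUB : p ∈ UB := hUB'sub (hsub hpD)
    have hxv : x ≠ v := fun h => hvUD (h ▸ hx)
    rw [hN' x, if_neg hxv] at hpN
    have hpv : p ≠ v := fun h => hvUB (h ▸ hpUB)
    by_cases hc : x ∈ N v₁ \ S ∪ N v₂ \ S
    · rw [if_pos hc] at hpN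
      rcases Finset.mem_insert.mp hpN with h | h
      · exact absurd h hpv
      · exact ⟨p, hpD, by simp only [Finset.mem_sdiff] at h; exact h.1.1⟩
    · rw [if_neg hc] at hpN
      exact ⟨p, hpD, by simp only [Finset.mem_sdiff] at hpN; exact hpN.1.1⟩
  -- Backward lemma 1
  have lemB1 : ∀ D' : Finset V, IsPDS UB' UD' N' D' → (∃ w ∈ D', w ∈ N v₁) →
      IsPDS UB UD N (insert u₂ D') := by
    rintro D' ⟨hsub, hdom⟩ ⟨w, hwD, hwN⟩
    constructor
    · intro x hx
      rcases Finset.mem_insert.mp hx with h | h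
      · exact h ▸ hu₂
      · exact hUB'sub (hsub h)
    · intro x hx
      by_cases hxu : x = u
      · exact ⟨u₂, Finset.mem_insert_self _ _, hxu ▸ hu₂u⟩
      by_cases hxv₂ : x = v₂
      · exact ⟨u₂, Finset.mem_insert_self _ _, hxv₂ ▸ hu₂Nv₂⟩
      by_cases hxv₁ : x = v₁
      · exact ⟨w, Finset.mem_insert_of_mem hwD, hxv₁ ▸ hwN⟩
      · obtain ⟨p, hp, hpN⟩ := hdomback D' hsub hdom x hx hxu hxv₁ hxv₂
        exact ⟨p, Finset.mem_insert_of_mem hp, hpN⟩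
  -- Backward lemma 2
  have lemB2 : ∀ D' : Finset V, IsPDS UB' UD' N' D' → (¬ ∃ w ∈ D', w ∈ N v₁) →
      IsPDS UB UD N (insert u₁ D') := by
    rintro D' ⟨hsub, hdom⟩ hno
    constructor
    · intro x hx
      rcases Finset.mem_insert.mp hx with h | h
      · exact h ▸ hu₁
      · exact hUB'sub (hsub h)
    · intro x hx
      by_cases hxu : x = u
      · exact ⟨u₁, Finset.mem_insert_self _ _, hxu ▸ hu₁u⟩
      by_cases hxv₁ : x = v₁
      · exact ⟨u₁, Finset.mem_insert_self _ _, hxv₁ ▸ hu₁Nv₁⟩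
      by_cases hxv₂ : x = v₂
      · -- v is dominated in H'; its dominator is in N v₂
        have hvUD' : v ∈ UD' := by rw [hUD']; exact Finset.mem_insert_self _ _
        obtain ⟨p, hpD, hpN⟩ := hdom v hvUD'
        rw [hN' v, if_pos rfl] at hpN
        rcases Finset.mem_union.mp hpN with h | h
        · exact absurd ⟨p, hpD, (Finset.mem_sdiff.mp h).1⟩ hno
        · exact ⟨p, Finset.mem_insert_of_mem hpD, hxv₂ ▸ (Finset.mem_sdiff.mp h).1⟩
      · obtain ⟨p, hp, hpN⟩ := hdomback D' hsub hdom x hx hxu hxv₁ hxv₂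
        exact ⟨p, Finset.mem_insert_of_mem hp, hpN⟩
  -- Forward lemma
  have lemA : ∀ P : Finset V, IsPDS UB UD N P →
      ∃ P' : Finset V, IsPDS UB' UD' N' P' ∧ P'.card + 1 ≤ P.card := by
    rintro P ⟨hsub, hdom⟩
    obtain ⟨p₀, hp₀P, hp₀N⟩ := hdom u hu
    rw [hNu] at hp₀N
    have hp₀ : p₀ = u₁ ∨ p₀ = u₂ := by simpa using hp₀N
    set Q : Finset V := P \ {u₁, u₂} with hQdef
    have hQsub : Q ⊆ UB' := by
      intro x hx
      have hxP : x ∈ P := (Finset.mem_sdiff.mp hx).1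
      have hx12 : x ∉ ({u₁, u₂} : Finset V) := (Finset.mem_sdiff.mp hx).2
      rw [hUB', Finset.mem_sdiff]
      refine ⟨hsub hxP, ?_⟩
      rw [hmemS]
      push_neg
      exact ⟨fun h => huUB (h ▸ hsub hxP), fun h => hx12 (by simp [h]),
        fun h => hx12 (by simp [h])⟩
    have hQdom : ∀ x ∈ UD', x ≠ v → ∃ w ∈ Q, w ∈ N' x := by
      intro x hx hxv
      rw [hUD'] at hx
      rcases Finset.mem_insert.mp hx with h | h
      · exact absurd h hxv
      simp only [Finset.mem_sdiff] at h
      obtain ⟨⟨hxUD, hxS⟩, hxv₁₂⟩ := h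
      obtain ⟨p, hpP, hpN⟩ := hdom x hxUD
      have hpUB : p ∈ UB := hsub hpP
      have hxNp : x ∈ N p := (hsymm p x).mp hpN
      have hp12 : p ∉ ({u₁, u₂} : Finset V) := by
        simp only [Finset.mem_insert, Finset.mem_singleton]
        push_neg
        constructor
        · rintro rfl
          rw [hNu₁] at hxNp
          simp only [Finset.mem_insert, Finset.mem_singleton] at hxNp
          rcases hxNp with h | h
          · exact hxS (by rw [hmemS]; exact Or.inl h)
          · exact hxv₁₂ (by simp [h])
        · rintro rfl
          rw [hNu₂] at hxNp
          simp only [Finset.mem_insert, Finset.mem_singleton] at hxNp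
          rcases hxNp with h | h
          · exact hxS (by rw [hmemS]; exact Or.inl h)
          · exact hxv₁₂ (by simp [h])
      have hpQ : p ∈ Q := Finset.mem_sdiff.mpr ⟨hpP, hp12⟩
      refine ⟨p, hpQ, ?_⟩
      rw [hN' x, if_neg hxv]
      have hpmem : p ∈ (N x \ S) \ {v₁, v₂} := by
        simp only [Finset.mem_sdiff, Finset.mem_insert, Finset.mem_singleton]
        refine ⟨⟨hpN, ?_⟩, ?_⟩
        · rw [hmemS]; push_neg
          exact ⟨fun h => huUB (h ▸ hpUB), fun h => hp12 (by simp [h]),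
            fun h => hp12 (by simp [h])⟩
        · push_neg
          exact ⟨fun h => hv₁UB (h ▸ hpUB), fun h => hv₂UB (h ▸ hpUB)⟩
      split_ifs with hc
      · exact Finset.mem_insert_of_mem hpmem
      · exact hpmem
    by_cases hcase : ∃ w ∈ Q, w ∈ N v₁ ∪ N v₂
    · obtain ⟨w, hwQ, hwN⟩ := hcase
      have hwUB : w ∈ UB := hsub (Finset.mem_sdiff.mp hwQ).1
      have hw12 := (Finset.mem_sdiff.mp hwQ).2
      have hwS : w ∉ S := by
        rw [hmemS]; push_neg
        exact ⟨fun h => huUB (h ▸ hwUB), fun h => hw12 (by simp [h]),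
          fun h => hw12 (by simp [h])⟩
      refine ⟨Q, ⟨hQsub, ?_⟩, ?_⟩
      · intro x hx
        by_cases hxv : x = v
        · subst hxv
          refine ⟨w, hwQ, ?_⟩
          rw [hN' x, if_pos rfl]
          rcases Finset.mem_union.mp hwN with h | h
          · exact Finset.mem_union_left _ (Finset.mem_sdiff.mpr ⟨h, hwS⟩)
          · exact Finset.mem_union_right _ (Finset.mem_sdiff.mpr ⟨h, hwS⟩)
        · exact hQdom x hx hxv
      · have hss : Q ⊆ P.erase p₀ := by
          intro x hx
          rw [Finset.mem_erase]
          have h2 := Finset.mem_sdiff.mp hx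
          refine ⟨?_, h2.1⟩
          rcases hp₀ with rfl | rfl
          · intro h; exact h2.2 (by simp [h])
          · intro h; exact h2.2 (by simp [h])
        have h1 := Finset.card_le_card hss
        rw [Finset.card_erase_of_mem hp₀P] at h1
        have h2 : 1 ≤ P.card := Finset.card_pos.mpr ⟨p₀, hp₀P⟩
        omega
    · push_neg at hcase
      have hu₁P : u₁ ∈ P := by
        obtain ⟨q, hqP, hqN⟩ := hdom v₁ hv₁
        have hq12 : q ∈ ({u₁, u₂} : Finset V) := by
          by_contra h
          exact hcase q (Finset.mem_sdiff.mpr ⟨hqP, h⟩) (Finset.mem_union_left _ hqN)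
        rcases Finset.mem_insert.mp hq12 with h | h
        · exact h ▸ hqP
        · rw [Finset.mem_singleton] at h
          exact absurd (h ▸ hqN) hu₂notNv₁
      have hu₂P : u₂ ∈ P := by
        obtain ⟨q, hqP, hqN⟩ := hdom v₂ hv₂
        have hq12 : q ∈ ({u₁, u₂} : Finset V) := by
          by_contra h
          exact hcase q (Finset.mem_sdiff.mpr ⟨hqP, h⟩) (Finset.mem_union_right _ hqN)
        rcases Finset.mem_insert.mp hq12 with h | h
        · exact absurd (h ▸ hqN) hu₁notNv₂
        · rw [Finset.mem_singleton] at h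
          exact h ▸ hqP
      obtain ⟨w₀, hw₀⟩ := hout
      simp only [Finset.mem_sdiff, Finset.mem_union, Finset.mem_insert,
        Finset.mem_singleton] at hw₀
      have hw₀UB : w₀ ∈ UB := by
        rcases hw₀.1.1 with h | h
        · exact hNsub v₁ hv₁ h
        · exact hNsub v₂ hv₂ h
      have hw₀S : w₀ ∉ S := by
        rw [hmemS]; push_neg
        refine ⟨fun h => huUB (h ▸ hw₀UB), fun h => hw₀.2 (Or.inl h),
          fun h => hw₀.2 (Or.inr h)⟩
      refine ⟨insert w₀ Q, ⟨?_, ?_⟩, ?_⟩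
      · intro x hx
        rcases Finset.mem_insert.mp hx with rfl | h
        · rw [hUB', Finset.mem_sdiff]; exact ⟨hw₀UB, hw₀S⟩
        · exact hQsub h
      · intro x hx
        by_cases hxv : x = v
        · subst hxv
          refine ⟨w₀, Finset.mem_insert_self _ _, ?_⟩
          rw [hN' x, if_pos rfl]
          rcases hw₀.1.1 with h | h
          · exact Finset.mem_union_left _ (Finset.mem_sdiff.mpr ⟨h, hw₀S⟩)
          · exact Finset.mem_union_right _ (Finset.mem_sdiff.mpr ⟨h, hw₀S⟩)
        · obtain ⟨p, hp, hpn⟩ := hQdom x hx hxv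
          exact ⟨p, Finset.mem_insert_of_mem hp, hpn⟩
      · have h12P : ({u₁, u₂} : Finset V) ⊆ P := by
          intro x hx
          rcases Finset.mem_insert.mp hx with rfl | hx
          · exact hu₁P
          · rw [Finset.mem_singleton.mp hx]; exact hu₂P
        have hcard12 : ({u₁, u₂} : Finset V).card = 2 := by
          rw [Finset.card_insert_of_notMem (by simp [hu₁₂]), Finset.card_singleton]
        have hQc : Q.card = P.card - 2 := by
          rw [hQdef, Finset.card_sdiff_of_subset h12P, hcard12]
        have h2P : 2 ≤ P.card := by
          calc 2 = ({u₁, u₂} : Finset V).card := hcard12.symm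
          _ ≤ P.card := Finset.card_le_card h12P
        have hic := Finset.card_insert_le w₀ Q
        omega
  -- base PDS of H
  have hUBPDS : IsPDS UB UD N UB := by
    refine ⟨Finset.Subset.refl _, fun x hx => ?_⟩
    obtain ⟨w, hw⟩ := hdeg x hx
    exact ⟨w, hNsub x hx hw, hw⟩
  -- card of insert
  have hcardins : ∀ (w : V) (D' : Finset V), D' ⊆ UB' → (w = u₁ ∨ w = u₂) →
      (insert w D').card = D'.card + 1 := by
    intro w D' hsub hw
    rw [Finset.card_insert_of_notMem]
    intro h
    have h2 := hsub h
    rw [hUB', Finset.mem_sdiff] at h2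
    refine h2.2 ?_
    rw [hmemS]
    rcases hw with rfl | rfl
    · exact Or.inr (Or.inl rfl)
    · exact Or.inr (Or.inr rfl)
  set γ := gammaP UB UD N with hγ
  set γ' := gammaP UB' UD' N' with hγ'
  have hne : {k | ∃ P : Finset V, IsPDS UB UD N P ∧ P.card = k}.Nonempty :=
    ⟨UB.card, UB, hUBPDS, rfl⟩
  have hγmem : γ ∈ {k | ∃ P : Finset V, IsPDS UB UD N P ∧ P.card = k} := by
    rw [hγ]; unfold gammaP; exact Nat.sInf_mem hne
  obtain ⟨P, hP, hPc⟩ := hγmem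
  obtain ⟨P', hP', hP'c⟩ := lemA P hP
  have hne' : {k | ∃ Q : Finset V, IsPDS UB' UD' N' Q ∧ Q.card = k}.Nonempty :=
    ⟨P'.card, P', hP', rfl⟩
  have hγ'le : γ' ≤ P'.card := by
    rw [hγ']; unfold gammaP; exact Nat.sInf_le ⟨P', hP', rfl⟩
  have hγ'mem : γ' ∈ {k | ∃ Q : Finset V, IsPDS UB' UD' N' Q ∧ Q.card = k} := by
    rw [hγ']; unfold gammaP; exact Nat.sInf_mem hne'
  obtain ⟨D₀, hD₀, hD₀c⟩ := hγ'mem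
  have hle1 : γ ≤ γ' + 1 := by
    by_cases hc : ∃ w ∈ D₀, w ∈ N v₁
    · have h1 := lemB1 D₀ hD₀ hc
      have h2 := hcardins u₂ D₀ hD₀.1 (Or.inr rfl)
      rw [hγ]; unfold gammaP
      exact Nat.sInf_le ⟨insert u₂ D₀, h1, by rw [h2, hD₀c]⟩
    · have h1 := lemB2 D₀ hD₀ hc
      have h2 := hcardins u₁ D₀ hD₀.1 (Or.inl rfl)
      rw [hγ]; unfold gammaP
      exact Nat.sInf_le ⟨insert u₁ D₀, h1, by rw [h2, hD₀c]⟩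
  have hle2 : γ' + 1 ≤ γ := by
    calc γ' + 1 ≤ P'.card + 1 := by omega
    _ ≤ P.card := hP'c
    _ = γ := hPc
  have heq : γ = γ' + 1 := le_antisymm hle1 hle2
  refine ⟨heq, ?_⟩
  intro D' hD' hD'c
  constructor
  · intro hc
    refine ⟨lemB1 D' hD' hc, ?_⟩
    rw [hcardins u₂ D' hD'.1 (Or.inr rfl), hD'c, ← heq]
  · intro hc
    refine ⟨lemB2 D' hD' hc, ?_⟩
    rw [hcardins u₁ D' hD'.1 (Or.inl rfl), hD'c, ← heq]
end

section
/- Let H be a bipartite instance in which every vertex of UD has at least one neighbor. Suppose u ∈ UB has N_H(u) = {u₁, u₂} with u₁ ≠ u₂ in UD, d_H(u₁) = d_H(u₂) = 2, N_H(u₁) = {u, v₁}, N_H(u₂) = {u, v₂}, where v₁, v₂ are distinct vertices of UB different from u. Let H' = iden_{H − N_H[u]}({v₁, v₂}) with identified vertex v (placed in the UB-part UB' of H'), and let UD' = UD \ {u₁, u₂}. Then γ_p(H→UD) = γ_p(H'→UD') + 1. Moreover, for any minimum UD'-PDS D of H': if v ∉ D then {u} ∪ D is a minimum UD-PDS of H,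 and if v ∈ D then (D ∪ {v₁, v₂}) \ {v} is a minimum UD-PDS of H. (Reduction Rule 6.) -/
/-- **Reduction Rule 6.** Let `u ∈ UB` with `N(u) = {u₁, u₂}`, where
`u₁, u₂ ∈ UD` both have degree 2, `N(u₁) = {u, v₁}`, `N(u₂) = {u, v₂}`, with
`v₁, v₂ ∈ UB` distinct and different from `u`.  Let
`H' = iden_{H − N[u]}({v₁, v₂})` with fresh identified vertex `v` placed in the
`UB`-part `UB'`, and let `UD' = UD \ {u₁, u₂}`.  Here `H − N[u]` deletes
`S = {u, u₁, u₂}`, so `UB' = insert v ((UB \ S) \ {v₁, v₂})`, and the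
neighborhood function `N'` is as described by identification.  Then
`γ_p(H→UD) = γ_p(H'→UD') + 1`, and for every minimum `UD'`-PDS `D` of `H'`:
if `v ∉ D` then `{u} ∪ D` is a minimum `UD`-PDS of `H`, and if `v ∈ D` then
`(D ∪ {v₁, v₂}) \ {v}` is a minimum `UD`-PDS of `H`. -/
theorem rule6 {V : Type*} [DecidableEq V]
    (UB UD : Finset V) (N : V → Finset V)
    (hdisj : Disjoint UB UD)
    (hsymm : ∀ a b : V, a ∈ N b ↔ b ∈ N a)
    (hbip : ∀ a b : V, b ∈ N a → (a ∈ UB ∧ b ∈ UD) ∨ (a ∈ UD ∧ b ∈ UB))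
    (hdeg : ∀ x ∈ UD, (N x).Nonempty)
    (u u₁ u₂ v₁ v₂ v : V)
    (hu : u ∈ UB) (hu₁ : u₁ ∈ UD) (hu₂ : u₂ ∈ UD) (hu₁₂ : u₁ ≠ u₂)
    (hNu : N u = {u₁, u₂})
    (hd₁ : (N u₁).card = 2) (hd₂ : (N u₂).card = 2)
    (hNu₁ : N u₁ = {u, v₁}) (hNu₂ : N u₂ = {u, v₂})
    (hv₁ : v₁ ∈ UB) (hv₂ : v₂ ∈ UB) (hv₁₂ : v₁ ≠ v₂) (hv₁u : v₁ ≠ u) (hv₂u : v₂ ≠ u)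
    (hvfresh : v ∉ UB ∪ UD)
    -- the identified instance `H'`
    (UB' UD' : Finset V) (N' : V → Finset V)
    (hUB' : UB' = insert v ((UB \ ({u, u₁, u₂} : Finset V)) \ {v₁, v₂}))
    (hUD' : UD' = UD \ {u₁, u₂})
    (hN' : ∀ x : V, N' x =
      if x = v then (N v₁ \ ({u, u₁, u₂} : Finset V)) ∪ (N v₂ \ ({u, u₁, u₂} : Finset V))
      else if x ∈ (N v₁ \ ({u, u₁, u₂} : Finset V)) ∪ (N v₂ \ ({u, u₁, u₂} : Finset V))
        then insert v ((N x \ ({u, u₁, u₂} : Finset V)) \ {v₁, v₂})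
        else (N x \ ({u, u₁, u₂} : Finset V)) \ {v₁, v₂}) :
    gammaP UB UD N = gammaP UB' UD' N' + 1 ∧
    ∀ D : Finset V, IsPDS UB' UD' N' D → D.card = gammaP UB' UD' N' →
      (v ∉ D →
        IsPDS UB UD N (insert u D) ∧ (insert u D).card = gammaP UB UD N) ∧
      (v ∈ D →
        IsPDS UB UD N ((D ∪ {v₁, v₂}) \ {v}) ∧
          ((D ∪ {v₁, v₂}) \ {v}).card = gammaP UB UD N) := by
    classical
  have hdl := Finset.disjoint_left.mp hdisj
  have hvB : v ∉ UB := fun h => hvfresh (Finset.mem_union_left _ h)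
  have hvD : v ∉ UD := fun h => hvfresh (Finset.mem_union_right _ h)
  have hvNe : ∀ x, v ∉ N x := by
    intro x hx
    rcases hbip x v hx with ⟨_, h2⟩ | ⟨_, h2⟩
    · exact hvD h2
    · exact hvB h2
  have hNUD : ∀ x ∈ UD, ∀ w ∈ N x, w ∈ UB := by
    intro x hx w hw
    rcases hbip x w hw with ⟨h1, _⟩ | ⟨_, h2⟩
    · exact absurd hx (hdl h1)
    · exact h2
  have hUD'mem : ∀ x ∈ UD', x ∈ UD ∧ x ≠ u₁ ∧ x ≠ u₂ := by
    intro x hx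
    rw [hUD', Finset.mem_sdiff] at hx
    simp only [Finset.mem_insert, Finset.mem_singleton] at hx
    push_neg at hx
    exact ⟨hx.1, hx.2.1, hx.2.2⟩
  have hmemUD' : ∀ x ∈ UD, x ≠ u₁ → x ≠ u₂ → x ∈ UD' := by
    intro x hx h1 h2
    rw [hUD', Finset.mem_sdiff]
    simp only [Finset.mem_insert, Finset.mem_singleton]
    exact ⟨hx, by push_neg; exact ⟨h1, h2⟩⟩
  -- w ∈ N x for x ∈ UD', w plain vertex (not u, v₁, v₂) survives to N' x
  have hbase : ∀ x ∈ UD', ∀ w, w ∈ N x → w ≠ u → w ≠ v₁ → w ≠ v₂ → w ∈ N' x := by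
    intro x hx w hw hwu hw1 hw2
    obtain ⟨hxD, _, _⟩ := hUD'mem x hx
    have hxv : x ≠ v := fun h => hvD (h ▸ hxD)
    have hwB : w ∈ UB := hNUD x hxD w hw
    have hwS : w ∉ ({u, u₁, u₂} : Finset V) := by
      simp only [Finset.mem_insert, Finset.mem_singleton]
      push_neg
      exact ⟨hwu, fun h => hdl hwB (h ▸ hu₁), fun h => hdl hwB (h ▸ hu₂)⟩
    have hwbase : w ∈ (N x \ ({u, u₁, u₂} : Finset V)) \ {v₁, v₂} := by
      rw [Finset.mem_sdiff, Finset.mem_sdiff]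
      refine ⟨⟨hw, hwS⟩, ?_⟩
      simp only [Finset.mem_insert, Finset.mem_singleton]
      push_neg
      exact ⟨hw1, hw2⟩
    rw [hN' x, if_neg hxv]
    split
    · exact Finset.mem_insert_of_mem hwbase
    · exact hwbase
  have hback : ∀ x ∈ UD', ∀ w, w ∈ N' x → w ≠ v → w ∈ N x := by
    intro x hx w hw hwv
    obtain ⟨hxD, _, _⟩ := hUD'mem x hx
    have hxv : x ≠ v := fun h => hvD (h ▸ hxD)
    rw [hN' x, if_neg hxv] at hw
    split at hw
    · rcases Finset.mem_insert.mp hw with h | h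
      · exact absurd h hwv
      · exact (Finset.mem_sdiff.mp (Finset.mem_sdiff.mp h).1).1
    · exact (Finset.mem_sdiff.mp (Finset.mem_sdiff.mp hw).1).1
  have hvN' : ∀ x ∈ UD', v ∈ N' x → v₁ ∈ N x ∨ v₂ ∈ N x := by
    intro x hx hv
    obtain ⟨hxD, _, _⟩ := hUD'mem x hx
    have hxv : x ≠ v := fun h => hvD (h ▸ hxD)
    rw [hN' x, if_neg hxv] at hv
    split at hv
    · rename_i hcond
      rcases Finset.mem_union.mp hcond with h | h
      · exact Or.inl ((hsymm x v₁).mp (Finset.mem_sdiff.mp h).1)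
      · exact Or.inr ((hsymm x v₂).mp (Finset.mem_sdiff.mp h).1)
    · exact absurd (Finset.mem_sdiff.mp (Finset.mem_sdiff.mp hv).1).1 (hvNe x)
  have hvmem : ∀ x ∈ UD', (v₁ ∈ N x ∨ v₂ ∈ N x) → v ∈ N' x := by
    intro x hx h12
    obtain ⟨hxD, hx1, hx2⟩ := hUD'mem x hx
    have hxv : x ≠ v := fun h => hvD (h ▸ hxD)
    have hxS : x ∉ ({u, u₁, u₂} : Finset V) := by
      simp only [Finset.mem_insert, Finset.mem_singleton]
      push_neg
      exact ⟨fun h => hdl hu (h ▸ hxD), hx1, hx2⟩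
    have hcond : x ∈ (N v₁ \ ({u, u₁, u₂} : Finset V)) ∪ (N v₂ \ ({u, u₁, u₂} : Finset V)) := by
      rcases h12 with h | h
      · exact Finset.mem_union_left _ (Finset.mem_sdiff.mpr ⟨(hsymm x v₁).mpr h, hxS⟩)
      · exact Finset.mem_union_right _ (Finset.mem_sdiff.mpr ⟨(hsymm x v₂).mpr h, hxS⟩)
    rw [hN' x, if_neg hxv, if_pos hcond]
    exact Finset.mem_insert_self _ _
  have hUB'fact : ∀ w ∈ UB', w ≠ v → w ∈ UB ∧ w ≠ u ∧ w ≠ v₁ ∧ w ≠ v₂ := by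
    intro w hw hwv
    rw [hUB'] at hw
    rcases Finset.mem_insert.mp hw with h | h
    · exact absurd h hwv
    · rw [Finset.mem_sdiff, Finset.mem_sdiff] at h
      simp only [Finset.mem_insert, Finset.mem_singleton] at h
      push_neg at h
      exact ⟨h.1.1, h.1.2.1, h.2.1, h.2.2⟩
  have hvnev₁ : v₁ ≠ v := fun h => hvB (h ▸ hv₁)
  have hvnev₂ : v₂ ≠ v := fun h => hvB (h ▸ hv₂)
  have huNu₁ : u ∈ N u₁ := by rw [hNu₁]; simp
  have hv₁Nu₁ : v₁ ∈ N u₁ := by rw [hNu₁]; simp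
  have huNu₂ : u ∈ N u₂ := by rw [hNu₂]; simp
  have hv₂Nu₂ : v₂ ∈ N u₂ := by rw [hNu₂]; simp
  -- Lifting lemmas
  have L1a : ∀ D : Finset V, IsPDS UB' UD' N' D → v ∉ D →
      IsPDS UB UD N (insert u D) ∧ (insert u D).card = D.card + 1 := by
    rintro D ⟨hDsub, hDdom⟩ hvD'
    have hDfact : ∀ w ∈ D, w ∈ UB ∧ w ≠ u ∧ w ≠ v₁ ∧ w ≠ v₂ := by
      intro w hw
      exact hUB'fact w (hDsub hw) (fun h => hvD' (h ▸ hw))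
    constructor
    · constructor
      · intro w hw
        rcases Finset.mem_insert.mp hw with h | h
        · exact h ▸ hu
        · exact (hDfact w h).1
      · intro x hx
        by_cases h1 : x = u₁
        · exact ⟨u, Finset.mem_insert_self _ _, h1 ▸ huNu₁⟩
        by_cases h2 : x = u₂
        · exact ⟨u, Finset.mem_insert_self _ _, h2 ▸ huNu₂⟩
        obtain ⟨w, hwD, hwN'⟩ := hDdom x (hmemUD' x hx h1 h2)
        have hwv : w ≠ v := fun h => hvD' (h ▸ hwD)
        exact ⟨w, Finset.mem_insert_of_mem hwD, hback x (hmemUD' x hx h1 h2) w hwN' hwv⟩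
    · rw [Finset.card_insert_of_notMem (fun h => (hDfact u h).2.1 rfl)]
  have L1b : ∀ D : Finset V, IsPDS UB' UD' N' D → v ∈ D →
      IsPDS UB UD N ((D ∪ {v₁, v₂}) \ {v}) ∧ ((D ∪ {v₁, v₂}) \ {v}).card = D.card + 1 := by
    rintro D ⟨hDsub, hDdom⟩ hvD'
    have hv₁P : v₁ ∈ (D ∪ {v₁, v₂}) \ {v} := by
      rw [Finset.mem_sdiff]
      exact ⟨Finset.mem_union_right _ (by simp), by simp [hvnev₁]⟩
    have hv₂P : v₂ ∈ (D ∪ {v₁, v₂}) \ {v} := by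
      rw [Finset.mem_sdiff]
      exact ⟨Finset.mem_union_right _ (by simp), by simp [hvnev₂]⟩
    constructor
    · constructor
      · intro w hw
        rw [Finset.mem_sdiff, Finset.mem_singleton] at hw
        rcases Finset.mem_union.mp hw.1 with h | h
        · exact (hUB'fact w (hDsub h) hw.2).1
        · rcases Finset.mem_insert.mp h with h' | h'
          · exact h' ▸ hv₁
          · exact (Finset.mem_singleton.mp h') ▸ hv₂
      · intro x hx
        by_cases h1 : x = u₁
        · exact ⟨v₁, hv₁P, h1 ▸ hv₁Nu₁⟩
        by_cases h2 : x = u₂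
        · exact ⟨v₂, hv₂P, h2 ▸ hv₂Nu₂⟩
        have hxUD' := hmemUD' x hx h1 h2
        obtain ⟨w, hwD, hwN'⟩ := hDdom x hxUD'
        by_cases hwv : w = v
        · rcases hvN' x hxUD' (hwv ▸ hwN') with h | h
          · exact ⟨v₁, hv₁P, h⟩
          · exact ⟨v₂, hv₂P, h⟩
        · refine ⟨w, ?_, hback x hxUD' w hwN' hwv⟩
          rw [Finset.mem_sdiff, Finset.mem_singleton]
          exact ⟨Finset.mem_union_left _ hwD, hwv⟩
    · have h1D : v₁ ∉ D := fun h =>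
        (hUB'fact v₁ (hDsub h) hvnev₁).2.2.1 rfl
      have h2D : v₂ ∉ D := fun h =>
        (hUB'fact v₂ (hDsub h) hvnev₂).2.2.2 rfl
      have hdisjD : Disjoint D ({v₁, v₂} : Finset V) := by
        rw [Finset.disjoint_right]
        intro a ha haD
        rcases Finset.mem_insert.mp ha with h | h
        · exact h1D (h ▸ haD)
        · exact h2D ((Finset.mem_singleton.mp h) ▸ haD)
      have hcu : (D ∪ {v₁, v₂}).card = D.card + 2 := by
        rw [Finset.card_union_of_disjoint hdisjD, Finset.card_insert_of_notMem (by simp [hv₁₂]),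
          Finset.card_singleton]
      have hvmemU : v ∈ D ∪ {v₁, v₂} := Finset.mem_union_left _ hvD'
      rw [← Finset.erase_eq, Finset.card_erase_of_mem hvmemU, hcu]
      omega
  -- Projection lemma
  have L2 : ∀ P : Finset V, IsPDS UB UD N P → ∃ D, IsPDS UB' UD' N' D ∧ D.card + 1 ≤ P.card := by
    rintro P ⟨hPsub, hPdom⟩
    obtain ⟨w1, hw1P, hw1N⟩ := hPdom u₁ hu₁
    obtain ⟨w2, hw2P, hw2N⟩ := hPdom u₂ hu₂
    rw [hNu₁] at hw1N; rw [hNu₂] at hw2N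
    have h1 : u ∈ P ∨ v₁ ∈ P := by
      rcases Finset.mem_insert.mp hw1N with h | h
      · exact Or.inl (h ▸ hw1P)
      · exact Or.inr ((Finset.mem_singleton.mp h) ▸ hw1P)
    have h2 : u ∈ P ∨ v₂ ∈ P := by
      rcases Finset.mem_insert.mp hw2N with h | h
      · exact Or.inl (h ▸ hw2P)
      · exact Or.inr ((Finset.mem_singleton.mp h) ▸ hw2P)
    set Q : Finset V := P \ {u, v₁, v₂} with hQ
    have hQmem : ∀ w, w ∈ Q ↔ w ∈ P ∧ w ≠ u ∧ w ≠ v₁ ∧ w ≠ v₂ := by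
      intro w
      rw [hQ, Finset.mem_sdiff]
      simp only [Finset.mem_insert, Finset.mem_singleton]
      constructor
      · rintro ⟨hp, hn⟩; push_neg at hn; exact ⟨hp, hn⟩
      · rintro ⟨hp, hn⟩; exact ⟨hp, by push_neg; exact hn⟩
    have hQsub : Q ⊆ UB' := by
      intro w hw
      obtain ⟨hwP, hwu, hw1, hw2⟩ := (hQmem w).mp hw
      have hwB := hPsub hwP
      rw [hUB']
      apply Finset.mem_insert_of_mem
      rw [Finset.mem_sdiff, Finset.mem_sdiff]
      refine ⟨⟨hwB, ?_⟩, ?_⟩ <;> simp only [Finset.mem_insert, Finset.mem_singleton] <;> push_neg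
      · exact ⟨hwu, fun h => hdl hwB (h ▸ hu₁), fun h => hdl hwB (h ▸ hu₂)⟩
      · exact ⟨hw1, hw2⟩
    have hwitness : ∀ x ∈ UD', ∀ w ∈ P, w ∈ N x →
        w = v₁ ∨ w = v₂ ∨ (w ∈ Q ∧ w ∈ N' x) := by
      intro x hx w hwP hwN
      obtain ⟨hxD, hx1, hx2⟩ := hUD'mem x hx
      have hwu : w ≠ u := by
        intro h
        have : x ∈ N u := (hsymm x u).mpr (h ▸ hwN)
        rw [hNu] at this
        rcases Finset.mem_insert.mp this with h' | h'
        · exact hx1 h'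
        · exact hx2 (Finset.mem_singleton.mp h')
      by_cases hw1 : w = v₁
      · exact Or.inl hw1
      by_cases hw2 : w = v₂
      · exact Or.inr (Or.inl hw2)
      exact Or.inr (Or.inr ⟨(hQmem w).mpr ⟨hwP, hwu, hw1, hw2⟩, hbase x hx w hwN hwu hw1 hw2⟩)
    by_cases hc : v₁ ∈ P ∨ v₂ ∈ P
    · refine ⟨insert v Q, ⟨?_, ?_⟩, ?_⟩
      · intro w hw
        rcases Finset.mem_insert.mp hw with h | h
        · rw [hUB']; exact h ▸ Finset.mem_insert_self _ _
        · exact hQsub h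
      · intro x hx
        obtain ⟨hxD, _, _⟩ := hUD'mem x hx
        obtain ⟨w, hwP, hwN⟩ := hPdom x hxD
        rcases hwitness x hx w hwP hwN with h | h | ⟨hq, hn⟩
        · exact ⟨v, Finset.mem_insert_self _ _, hvmem x hx (Or.inl (h ▸ hwN))⟩
        · exact ⟨v, Finset.mem_insert_self _ _, hvmem x hx (Or.inr (h ▸ hwN))⟩
        · exact ⟨w, Finset.mem_insert_of_mem hq, hn⟩
      · have hvQ : v ∉ Q := fun h => hvB (hPsub ((hQmem v).mp h).1)
        rw [Finset.card_insert_of_notMem hvQ]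
        -- find two distinct elements a b of P among {u, v₁, v₂}
        obtain ⟨a, b, hab, haP, hbP, haS, hbS⟩ :
            ∃ a b : V, a ≠ b ∧ a ∈ P ∧ b ∈ P ∧
              a ∈ ({u, v₁, v₂} : Finset V) ∧ b ∈ ({u, v₁, v₂} : Finset V) := by
          rcases hc with hcv | hcv
          · rcases h2 with hup | hvp
            · exact ⟨u, v₁, Ne.symm hv₁u, hup, hcv, by simp, by simp⟩
            · exact ⟨v₁, v₂, hv₁₂, hcv, hvp, by simp, by simp⟩
          · rcases h1 with hup | hvp
            · exact ⟨u, v₂, Ne.symm hv₂u, hup, hcv, by simp, by simp⟩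
            · exact ⟨v₁, v₂, hv₁₂, hvp, hcv, by simp, by simp⟩
        have hQsub2 : Q ⊆ (P.erase a).erase b := by
          intro w hw
          obtain ⟨hwP, hwu, hw1, hw2⟩ := (hQmem w).mp hw
          have hwa : w ≠ a := by
            intro h
            rcases Finset.mem_insert.mp haS with h' | h'
            · exact hwu (h.trans h')
            · rcases Finset.mem_insert.mp h' with h'' | h''
              · exact hw1 (h.trans h'')
              · exact hw2 (h.trans (Finset.mem_singleton.mp h''))
          have hwb : w ≠ b := by
            intro h
            rcases Finset.mem_insert.mp hbS with h' | h'
            · exact hwu (h.trans h')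
            · rcases Finset.mem_insert.mp h' with h'' | h''
              · exact hw1 (h.trans h'')
              · exact hw2 (h.trans (Finset.mem_singleton.mp h''))
          exact Finset.mem_erase.mpr ⟨hwb, Finset.mem_erase.mpr ⟨hwa, hwP⟩⟩
        have hcard2 : ((P.erase a).erase b).card = P.card - 2 := by
          rw [Finset.card_erase_of_mem (Finset.mem_erase.mpr ⟨hab.symm, hbP⟩),
            Finset.card_erase_of_mem haP]
          omega
        have hPc : 2 ≤ P.card := Finset.one_lt_card.mpr ⟨a, haP, b, hbP, hab⟩
        have := Finset.card_le_card hQsub2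
        omega
    · push_neg at hc
      have hup : u ∈ P := by
        rcases h1 with h | h
        · exact h
        · exact absurd h hc.1
      refine ⟨Q, ⟨hQsub, ?_⟩, ?_⟩
      · intro x hx
        obtain ⟨hxD, _, _⟩ := hUD'mem x hx
        obtain ⟨w, hwP, hwN⟩ := hPdom x hxD
        rcases hwitness x hx w hwP hwN with h | h | ⟨hq, hn⟩
        · exact absurd (h ▸ hwP) hc.1
        · exact absurd (h ▸ hwP) hc.2
        · exact ⟨w, hq, hn⟩
      · have hQsub2 : Q ⊆ P.erase u := by
          intro w hw
          obtain ⟨hwP, hwu, _, _⟩ := (hQmem w).mp hw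
          exact Finset.mem_erase.mpr ⟨hwu, hwP⟩
        have := Finset.card_le_card hQsub2
        rw [Finset.card_erase_of_mem hup] at this
        have hPc : 1 ≤ P.card := Finset.card_pos.mpr ⟨u, hup⟩
        omega
  -- nonemptiness
  have hUBPDS : IsPDS UB UD N UB := by
    refine ⟨Finset.Subset.refl _, ?_⟩
    intro x hx
    obtain ⟨w, hw⟩ := hdeg x hx
    exact ⟨w, hNUD x hx w hw, hw⟩
  have hAne : {k | ∃ P : Finset V, IsPDS UB UD N P ∧ P.card = k}.Nonempty :=
    ⟨UB.card, UB, hUBPDS, rfl⟩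
  obtain ⟨D0, hD0, _⟩ := L2 UB hUBPDS
  have hBne : {k | ∃ P : Finset V, IsPDS UB' UD' N' P ∧ P.card = k}.Nonempty :=
    ⟨D0.card, D0, hD0, rfl⟩
  have hγmem : ∃ P : Finset V, IsPDS UB UD N P ∧ P.card = gammaP UB UD N :=
    Nat.sInf_mem hAne
  have hγ'mem : ∃ P : Finset V, IsPDS UB' UD' N' P ∧ P.card = gammaP UB' UD' N' :=
    Nat.sInf_mem hBne
  have hle1 : gammaP UB' UD' N' + 1 ≤ gammaP UB UD N := by
    obtain ⟨P, hP, hPc⟩ := hγmem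
    obtain ⟨D, hD, hDc⟩ := L2 P hP
    have : gammaP UB' UD' N' ≤ D.card := Nat.sInf_le ⟨D, hD, rfl⟩
    omega
  have hle2 : gammaP UB UD N ≤ gammaP UB' UD' N' + 1 := by
    obtain ⟨D, hD, hDc⟩ := hγ'mem
    by_cases hvD' : v ∈ D
    · obtain ⟨hpds, hcard⟩ := L1b D hD hvD'
      have : gammaP UB UD N ≤ ((D ∪ {v₁, v₂}) \ {v}).card := Nat.sInf_le ⟨_, hpds, rfl⟩
      omega
    · obtain ⟨hpds, hcard⟩ := L1a D hD hvD'
      have : gammaP UB UD N ≤ (insert u D).card := Nat.sInf_le ⟨_, hpds, rfl⟩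
      omega
  have heq : gammaP UB UD N = gammaP UB' UD' N' + 1 := le_antisymm hle2 hle1
  refine ⟨heq, ?_⟩
  intro D hD hcard
  constructor
  · intro hvD'
    obtain ⟨hpds, hc⟩ := L1a D hD hvD'
    exact ⟨hpds, by omega⟩
  · intro hvD'
    obtain ⟨hpds, hc⟩ := L1b D hD hvD'
    exact ⟨hpds, by omega⟩
end

section
/- Let H be a bipartite instance in which every vertex of UD has at least one neighbor. Suppose u ∈ UD has d_H(u) = 2 with N_H(u) = {v₁, v₂}, and there exists a vertex v ∈ UB \ {v₁, v₂} such that N_H(v) ⊆ N_H(v₁) ∪ N_H(v₂). Then γ_p(H→UD) = γ_p((H − v)→UD); in particular, H has a minimum UD-PDS that does not contain v. (Reduction Rule 9.) -/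
private lemma swap_pds {V : Type*} [DecidableEq V]
    (UB UD : Finset V) (N : V → Finset V) (P : Finset V) (v a b : V)
    (hPDS : IsPDS UB UD N P)
    (hsymm : ∀ x y : V, x ∈ N y ↔ y ∈ N x)
    (hsub : N v ⊆ N a ∪ N b)
    (ha : a ∈ P) (hb : b ∈ UB) (hva : v ≠ a) (hvb : v ≠ b) (hvP : v ∈ P) :
    IsPDS UB UD N (insert b (P.erase v)) ∧
      (insert b (P.erase v)).card ≤ P.card ∧ v ∉ insert b (P.erase v) := by
  obtain ⟨hPUB, hdom⟩ := hPDS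
  refine ⟨⟨?_, ?_⟩, ?_, ?_⟩
  · intro x hx
    rcases Finset.mem_insert.1 hx with rfl | hx
    · exact hb
    · exact hPUB (Finset.mem_of_mem_erase hx)
  · intro x hx
    obtain ⟨w, hwP, hwN⟩ := hdom x hx
    by_cases hwv : w = v
    · subst hwv
      have hxNv : x ∈ N w := (hsymm x w).2 hwN
      rcases Finset.mem_union.1 (hsub hxNv) with h | h
      · exact ⟨a, Finset.mem_insert_of_mem (Finset.mem_erase.2 ⟨(Ne.symm hva), ha⟩),
          (hsymm a x).2 h⟩
      · exact ⟨b, Finset.mem_insert_self _ _, (hsymm b x).2 h⟩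
    · exact ⟨w, Finset.mem_insert_of_mem (Finset.mem_erase.2 ⟨hwv, hwP⟩), hwN⟩
  · calc (insert b (P.erase v)).card ≤ (P.erase v).card + 1 := Finset.card_insert_le _ _
      _ = P.card := Finset.card_erase_add_one hvP
  · simp [Finset.mem_insert, hvb, Finset.mem_erase]

/-- **Reduction Rule 9.** If `u ∈ UD` has degree 2 with `N(u) = {v₁, v₂}` and
there is `v ∈ UB \ {v₁, v₂}` with `N(v) ⊆ N(v₁) ∪ N(v₂)`, then
`γ_p(H→UD) = γ_p((H − v)→UD)`; in particular `H` has a minimum `UD`-PDS not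
containing `v`. -/
theorem rule9 {V : Type*} [DecidableEq V]
    (UB UD : Finset V) (N : V → Finset V)
    (hdisj : Disjoint UB UD)
    (hsymm : ∀ a b : V, a ∈ N b ↔ b ∈ N a)
    (hbip : ∀ a b : V, b ∈ N a → (a ∈ UB ∧ b ∈ UD) ∨ (a ∈ UD ∧ b ∈ UB))
    (hdeg : ∀ x ∈ UD, (N x).Nonempty)
    (u v₁ v₂ v : V) (hu : u ∈ UD) (hNu : N u = {v₁, v₂}) (hne : v₁ ≠ v₂)
    (hv : v ∈ UB) (hvv₁ : v ≠ v₁) (hvv₂ : v ≠ v₂)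
    (hsub : N v ⊆ N v₁ ∪ N v₂) :
    gammaP UB UD N
        = gammaP (UB \ {v}) (UD \ {v}) (fun x => N x \ {v}) ∧
    ∃ P : Finset V, IsPDS UB UD N P ∧ P.card = gammaP UB UD N ∧ v ∉ P := by
  -- basic membership facts
  have huUB : u ∉ UB := fun h => (Finset.disjoint_left.1 hdisj h) hu
  have hv₁UB : v₁ ∈ UB := by
    have h1 : v₁ ∈ N u := by rw [hNu]; simp
    rcases hbip u v₁ h1 with ⟨h, _⟩ | ⟨_, h⟩
    · exact absurd h huUB
    · exact h
  have hv₂UB : v₂ ∈ UB := by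
    have h1 : v₂ ∈ N u := by rw [hNu]; simp
    rcases hbip u v₂ h1 with ⟨h, _⟩ | ⟨_, h⟩
    · exact absurd h huUB
    · exact h
  -- any PDS can be turned into one of size ≤ it avoiding v
  have key : ∀ P : Finset V, IsPDS UB UD N P →
      ∃ P' : Finset V, IsPDS UB UD N P' ∧ P'.card ≤ P.card ∧ v ∉ P' := by
    intro P hP
    by_cases hvP : v ∈ P
    · obtain ⟨w, hwP, hwN⟩ := hP.2 u hu
      rw [hNu] at hwN
      rcases Finset.mem_insert.1 hwN with rfl | hwN
      · obtain ⟨h1, h2, h3⟩ := swap_pds UB UD N P v w v₂ hP hsymm hsub hwP hv₂UB hvv₁ hvv₂ hvP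
        exact ⟨_, h1, h2, h3⟩
      · rw [Finset.mem_singleton] at hwN; subst hwN
        obtain ⟨h1, h2, h3⟩ := swap_pds UB UD N P v w v₁ hP hsymm
          (by rwa [Finset.union_comm (N v₁)] at hsub) hwP hv₁UB hvv₂ hvv₁ hvP
        exact ⟨_, h1, h2, h3⟩
    · exact ⟨P, hP, le_refl _, hvP⟩
  -- the set defining gammaP is nonempty (UB is a PDS)
  have hUBpds : IsPDS UB UD N UB := by
    refine ⟨Finset.Subset.refl _, fun x hx => ?_⟩
    obtain ⟨w, hw⟩ := hdeg x hx
    rcases hbip x w hw with ⟨h, _⟩ | ⟨_, h⟩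
    · exact absurd h (fun h => (Finset.disjoint_left.1 hdisj h) hx)
    · exact ⟨w, h, hw⟩
  have hSne : {k | ∃ P : Finset V, IsPDS UB UD N P ∧ P.card = k}.Nonempty :=
    ⟨UB.card, UB, hUBpds, rfl⟩
  -- obtain minimum PDS
  obtain ⟨P, hP, hPcard⟩ := Nat.sInf_mem hSne
  obtain ⟨P', hP', hP'le, hvP'⟩ := key P hP
  have hP'ge : gammaP UB UD N ≤ P'.card := Nat.sInf_le ⟨P', hP', rfl⟩
  have hP'card : P'.card = gammaP UB UD N := le_antisymm (hP'le.trans hPcard.le) hP'ge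
  -- P' is a PDS of the reduced instance
  have hUDv : UD \ {v} = UD := by
    apply Finset.sdiff_eq_self_of_disjoint
    simp [Finset.disjoint_singleton_right, fun h => (Finset.disjoint_left.1 hdisj hv) h]
  have hP'red : IsPDS (UB \ {v}) (UD \ {v}) (fun x => N x \ {v}) P' := by
    refine ⟨fun x hx => Finset.mem_sdiff.2 ⟨hP'.1 hx, by
      simp only [Finset.mem_singleton]; rintro rfl; exact hvP' hx⟩, fun x hx => ?_⟩
    rw [hUDv] at hx
    obtain ⟨w, hwP, hwN⟩ := hP'.2 x hx
    exact ⟨w, hwP, Finset.mem_sdiff.2 ⟨hwN, by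
      simp only [Finset.mem_singleton]; rintro rfl; exact hvP' hwP⟩⟩
  -- gammaP reduced ≤ gammaP
  have hle : gammaP (UB \ {v}) (UD \ {v}) (fun x => N x \ {v}) ≤ gammaP UB UD N := by
    rw [← hP'card]; exact Nat.sInf_le ⟨P', hP'red, rfl⟩
  -- gammaP ≤ gammaP reduced : any PDS of the reduced instance is a PDS of H
  have hge : gammaP UB UD N ≤ gammaP (UB \ {v}) (UD \ {v}) (fun x => N x \ {v}) := by
    have hS'ne : {k | ∃ Q : Finset V,
        IsPDS (UB \ {v}) (UD \ {v}) (fun x => N x \ {v}) Q ∧ Q.card = k}.Nonempty :=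
      ⟨P'.card, P', hP'red, rfl⟩
    obtain ⟨Q, hQ, hQcard⟩ := Nat.sInf_mem hS'ne
    have hQpds : IsPDS UB UD N Q := by
      refine ⟨fun x hx => (Finset.mem_sdiff.1 (hQ.1 hx)).1, fun x hx => ?_⟩
      obtain ⟨w, hwQ, hwN⟩ := hQ.2 x (by rw [hUDv]; exact hx)
      exact ⟨w, hwQ, (Finset.mem_sdiff.1 hwN).1⟩
    calc gammaP UB UD N ≤ Q.card := Nat.sInf_le ⟨Q, hQpds, rfl⟩
      _ = _ := hQcard
  exact ⟨le_antisymm hge hle, P', hP', hP'card, hvP'⟩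
end

section
/- Let f be a 3-SAT instance with clauses C_1, …, C_m over variables x_1, …, x_n, and let G be the graph constructed from f with parts V_1, …, V_{n+1}. If a truth assignment σ satisfies f, then the set P = {x_i : i ∈ [n], σ(x_i) = 1} ∪ {x̄_i : i ∈ [n], σ(x_i) = 0} is a V_{n+1}-PDS of G of cardinality n. -/
/-- A literal over variables `x_1, …, x_n`: a pair `(i, b)` where `b = true`
denotes the variable `x_i` and `b = false` its negation `x̄_i`. -/
abbrev Lit (n : ℕ) := Fin n × Bool

/-- A `V_{n+1}`-PDS of the graph `G` constructed from the 3-SAT instance with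
clauses `C j`: a set `P` of literal vertices intersecting each
`V_i = {x_i, x̄_i}` such that every clause vertex has a neighbor in `P`. -/
def IsVPDS {n m : ℕ} (C : Fin m → Finset (Lit n)) (P : Finset (Lit n)) : Prop :=
  (∀ i : Fin n, ∃ b : Bool, (i, b) ∈ P) ∧ (∀ j : Fin m, ∃ ℓ ∈ P, ℓ ∈ C j)

/-- If a truth assignment `σ` satisfies `f`, then
`P = {x_i : σ(x_i) = 1} ∪ {x̄_i : σ(x_i) = 0}`, i.e. the image of
`i ↦ (i, σ i)`, is a `V_{n+1}`-PDS of `G` of cardinality `n`. -/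
theorem assignment_gives_pds {n m : ℕ} (C : Fin m → Finset (Lit n))
    (h3 : ∀ j : Fin m, (C j).card = 3)
    (σ : Fin n → Bool) (hσ : ∀ j : Fin m, ∃ ℓ ∈ C j, σ ℓ.1 = ℓ.2) :
    IsVPDS C (Finset.univ.image (fun i : Fin n => (i, σ i))) ∧
    (Finset.univ.image (fun i : Fin n => (i, σ i))).card = n := by
  constructor
  · constructor
    · intro i
      exact ⟨σ i, Finset.mem_image_of_mem _ (Finset.mem_univ i)⟩
    · intro j
      obtain ⟨ℓ, hℓC, hℓσ⟩ := hσ j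
      refine ⟨ℓ, ?_, hℓC⟩
      refine Finset.mem_image.2 ⟨ℓ.1, Finset.mem_univ _, ?_⟩
      rw [hℓσ]
  · rw [Finset.card_image_of_injective _ (fun a b h => (Prod.mk.injEq _ _ _ _ ▸ h).1)]
    simp
end

section
/- Let f be a 3-SAT instance with clauses C_1, …, C_m over variables x_1, …, x_n, and let G be the graph constructed from f with parts V_1, …, V_{n+1}. Then G has a V_{n+1}-PDS of cardinality at most n if and only if f is satisfiable. (Correctness of the reduction in Theorem 1.) -/
/-- **Correctness of the reduction in Theorem 1.** `G` has a `V_{n+1}`-PDS of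
cardinality at most `n` iff the 3-SAT instance `f` is satisfiable. -/
theorem reduction_correct {n m : ℕ} (C : Fin m → Finset (Lit n))
    (h3 : ∀ j : Fin m, (C j).card = 3) :
    (∃ P : Finset (Lit n), IsVPDS C P ∧ P.card ≤ n) ↔
    (∃ σ : Fin n → Bool, ∀ j : Fin m, ∃ ℓ ∈ C j, σ ℓ.1 = ℓ.2) := by
  constructor
  · rintro ⟨P, ⟨h1, h2⟩, hcard⟩
    choose σ hσ using h1
    refine ⟨σ, fun j => ?_⟩
    obtain ⟨ℓ, hℓP, hℓC⟩ := h2 j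
    refine ⟨ℓ, hℓC, ?_⟩
    -- fst is injective on P since card P ≤ n and fst surjects onto Fin n
    have hsurj : ∀ i : Fin n, i ∈ P.image Prod.fst := fun i =>
      Finset.mem_image.mpr ⟨(i, σ i), hσ i, rfl⟩
    have himg : P.image Prod.fst = Finset.univ :=
      Finset.eq_univ_iff_forall.mpr hsurj
    have hle : n ≤ P.card := by
      have := Finset.card_image_le (s := P) (f := Prod.fst)
      rw [himg, Finset.card_univ, Fintype.card_fin] at this
      exact this
    have hcardeq : (P.image Prod.fst).card = P.card := by
      rw [himg, Finset.card_univ, Fintype.card_fin]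
      omega
    have hinj := Finset.injOn_of_card_image_eq hcardeq
    have heq : (ℓ.1, σ ℓ.1) = ℓ := hinj (hσ ℓ.1) hℓP rfl
    have := congrArg Prod.snd heq
    simpa using this
  · rintro ⟨σ, hσ⟩
    refine ⟨Finset.univ.image (fun i => (i, σ i)), ⟨fun i => ⟨σ i, ?_⟩, fun j => ?_⟩, ?_⟩
    · exact Finset.mem_image.mpr ⟨i, Finset.mem_univ i, rfl⟩
    · obtain ⟨ℓ, hℓC, hℓσ⟩ := hσ j
      refine ⟨ℓ, Finset.mem_image.mpr ⟨ℓ.1, Finset.mem_univ _, ?_⟩, hℓC⟩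
      cases ℓ; simp_all
    · calc (Finset.univ.image (fun i : Fin n => (i, σ i))).card
          ≤ Finset.univ.card := Finset.card_image_le
        _ = n := by simp
end

section
/- Let H be a bipartite instance with parts UB and UD, let f_1, …, f_k : UB → ℤ, let L ∈ ℤ, and let c_1, …, c_k ∈ ℤ be such that for every i ∈ [k], every feasible solution x of LP(f_i) satisfies ∑_{v ∈ UB} f_i(v) x_v > c_i − 1. Then for every UD-PDS D of H with |D| = L, the indicator vector x^D is a feasible solution of LP(f_j) for every j ∈ [k]; in particular, ∑_{v ∈ UB} f_j(v) x^D_v ≥ c_j for every j ∈ [k]. (Key inductive claim in the proof of Theorem 2, with c_i playing the role of ⌈sol_i⌉.) -/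
/-- `x` is a feasible solution of the linear program `LP(f_j)`:
`∑_{v ∈ N(u)} x_v ≥ 1` for every `u ∈ UD`; `∑_{v ∈ UB} x_v = L`;
`∑_{v ∈ UB} f_i(v) x_v ≥ c_i` for every `i ∈ [j−1]`; and `0 ≤ x_v ≤ 1`
for all `v ∈ UB`. -/
def LPFeasible {V : Type*} {k : ℕ} (UB UD : Finset V) (N : V → Finset V)
    (f : Fin k → V → ℤ) (L : ℤ) (c : Fin k → ℤ) (j : Fin k) (x : V → ℝ) : Prop :=
  (∀ u ∈ UD, 1 ≤ ∑ v ∈ N u, x v) ∧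
  (∑ v ∈ UB, x v = (L : ℝ)) ∧
  (∀ i : Fin k, i < j → (c i : ℝ) ≤ ∑ v ∈ UB, (f i v : ℝ) * x v) ∧
  (∀ v ∈ UB, 0 ≤ x v ∧ x v ≤ 1)

/-- **Key inductive claim in the proof of Theorem 2.** If for every `i ∈ [k]`
every feasible solution `x` of `LP(f_i)` satisfies
`∑_{v ∈ UB} f_i(v) x_v > c_i − 1`, then for every `UD`-PDS `D` with `|D| = L`,
the indicator vector `x^D` is feasible for every `LP(f_j)`; in particular
`∑_{v ∈ UB} f_j(v) x^D_v ≥ c_j` for every `j ∈ [k]`. -/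
theorem indicator_feasible {V : Type*} [DecidableEq V] {k : ℕ}
    (UB UD : Finset V) (N : V → Finset V)
    (hdisj : Disjoint UB UD)
    (hbip : ∀ u ∈ UD, N u ⊆ UB)
    (f : Fin k → V → ℤ) (L : ℤ) (c : Fin k → ℤ)
    (hopt : ∀ j : Fin k, ∀ x : V → ℝ, LPFeasible UB UD N f L c j x →
      (c j : ℝ) - 1 < ∑ v ∈ UB, (f j v : ℝ) * x v)
    (D : Finset V) (hD : IsPDS UB UD N D) (hcard : (D.card : ℤ) = L) :
    (∀ j : Fin k,
      LPFeasible UB UD N f L c j (fun v => if v ∈ D then (1 : ℝ) else 0)) ∧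
    (∀ j : Fin k,
      (c j : ℝ) ≤ ∑ v ∈ UB, (f j v : ℝ) * (if v ∈ D then (1 : ℝ) else 0)) := by
  obtain ⟨hDsub, hDdom⟩ := hD
  set x : V → ℝ := fun v => if v ∈ D then (1 : ℝ) else 0 with hxdef
  have hx01 : ∀ v ∈ UB, 0 ≤ x v ∧ x v ≤ 1 := by
    intro v _
    simp only [x]
    split <;> norm_num
  have hsumUB : ∑ v ∈ UB, x v = (L : ℝ) := by
    simp only [x]
    rw [Finset.sum_ite_mem, Finset.inter_eq_right.mpr hDsub]
    simp [← hcard]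
  have hfsum : ∀ i : Fin k,
      ∑ v ∈ UB, (f i v : ℝ) * x v = ((∑ v ∈ D, f i v : ℤ) : ℝ) := by
    intro i
    simp only [x, mul_ite, mul_one, mul_zero]
    rw [Finset.sum_ite_mem, Finset.inter_eq_right.mpr hDsub]
    push_cast
    ring
  have hnbr : ∀ u ∈ UD, 1 ≤ ∑ v ∈ N u, x v := by
    intro u hu
    obtain ⟨w, hwD, hwN⟩ := hDdom u hu
    have h1 : x w = 1 := by simp [x, hwD]
    calc (1 : ℝ) = x w := h1.symm
      _ ≤ ∑ v ∈ N u, x v := by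
          refine Finset.single_le_sum (fun v _ => ?_) hwN
          simp only [x]; split <;> norm_num
  have key : ∀ n : ℕ, ∀ j : Fin k, j.val = n → LPFeasible UB UD N f L c j x := by
    intro n
    induction n using Nat.strong_induction_on with
    | _ n ih =>
      intro j hj
      refine ⟨hnbr, hsumUB, ?_, hx01⟩
      intro i hij
      have hfeas : LPFeasible UB UD N f L c i x := ih i.val (by omega) i rfl
      have hgt := hopt i x hfeas
      rw [hfsum i] at hgt ⊢
      have : c i - 1 < ∑ v ∈ D, f i v := by exact_mod_cast hgt
      exact_mod_cast (by omega : c i ≤ ∑ v ∈ D, f i v)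
  have key' : ∀ j : Fin k, LPFeasible UB UD N f L c j x := fun j => key j.val j rfl
  refine ⟨key', fun j => ?_⟩
  have hgt := hopt j x (key' j)
  rw [hfsum j] at hgt ⊢
  have : c j - 1 < ∑ v ∈ D, f j v := by exact_mod_cast hgt
  exact_mod_cast (by omega : c j ≤ ∑ v ∈ D, f j v)
end

section
/- Let H be a bipartite instance with parts UB and UD, let f_1, …, f_k : UB → ℤ (k ≥ 1), let L ∈ ℤ, and let c_1, …, c_k ∈ ℤ. Assume: (i) every UD-PDS of H has cardinality at least L; (ii) for every i ∈ [k], every feasible solution x of LP(f_i) satisfies ∑_{v ∈ UB} f_i(v) x_v > c_i − 1; and (iii) there exists j ∈ [k] such that LP(f_j) has no feasible solution. Then every UD-PDS of H has cardinality at least L + 1, i.e., γ_p(H→UD) ≥ L + 1. (Theorem 2, with L playing the role of ⌈sol⌉ and c_i of ⌈sol_i⌉.) -/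
/-- **Theorem 2.** Assume (i) every `UD`-PDS of `H` has cardinality at least
`L`; (ii) for every `i ∈ [k]`, every feasible solution `x` of `LP(f_i)`
satisfies `∑_{v ∈ UB} f_i(v) x_v > c_i − 1`; and (iii) some `LP(f_j)` has no
feasible solution.  Then every `UD`-PDS of `H` has cardinality at least
`L + 1`, i.e. `γ_p(H→UD) ≥ L + 1`. -/
theorem improved_lower_bound {V : Type*} [DecidableEq V] {k : ℕ} (hk : 1 ≤ k)
    (UB UD : Finset V) (N : V → Finset V)
    (hdisj : Disjoint UB UD)
    (hbip : ∀ u ∈ UD, N u ⊆ UB)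
    (f : Fin k → V → ℤ) (L : ℤ) (c : Fin k → ℤ)
    (hlb : ∀ D : Finset V, IsPDS UB UD N D → L ≤ (D.card : ℤ))
    (hopt : ∀ j : Fin k, ∀ x : V → ℝ, LPFeasible UB UD N f L c j x →
      (c j : ℝ) - 1 < ∑ v ∈ UB, (f j v : ℝ) * x v)
    (hinfeas : ∃ j : Fin k, ∀ x : V → ℝ, ¬ LPFeasible UB UD N f L c j x) :
    ∀ D : Finset V, IsPDS UB UD N D → L + 1 ≤ (D.card : ℤ) := by
  intro D hD
  by_contra hcon
  push_neg at hcon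
  have hcard : (D.card : ℤ) = L := le_antisymm (by omega) (hlb D hD)
  set x : V → ℝ := fun v => if v ∈ D then 1 else 0 with hx
  have hDsub : D ⊆ UB := hD.1
  have hsum : ∑ v ∈ UB, x v = (L : ℝ) := by
    have h1 : ∑ v ∈ UB, x v = ∑ v ∈ UB ∩ D, (1 : ℝ) := by
      simp [hx, Finset.sum_ite_mem]
    rw [h1, Finset.inter_eq_right.mpr hDsub, Finset.sum_const, nsmul_eq_mul, mul_one]
    exact_mod_cast congrArg (Int.cast : ℤ → ℝ) hcard
  have hnb : ∀ u ∈ UD, 1 ≤ ∑ v ∈ N u, x v := by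
    intro u hu
    obtain ⟨w, hwD, hwN⟩ := hD.2 u hu
    have h1 : x w ≤ ∑ v ∈ N u, x v := by
      apply Finset.single_le_sum (f := x) (fun v _ => ?_) hwN
      simp only [hx]
      split <;> norm_num
    simpa [hx, hwD] using h1
  have hbound : ∀ v ∈ UB, 0 ≤ x v ∧ x v ≤ 1 := by
    intro v _
    simp only [hx]
    split <;> norm_num
  have hint : ∀ i : Fin k, ∑ v ∈ UB, (f i v : ℝ) * x v = ((∑ v ∈ D, f i v : ℤ) : ℝ) := by
    intro i
    have h1 : ∑ v ∈ UB, (f i v : ℝ) * x v = ∑ v ∈ UB ∩ D, (f i v : ℝ) := by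
      simp [hx, mul_ite, mul_one, mul_zero, Finset.sum_ite_mem]
    rw [h1, Finset.inter_eq_right.mpr hDsub]
    push_cast
    rfl
  have feas : ∀ n : ℕ, ∀ j : Fin k, (j : ℕ) = n → LPFeasible UB UD N f L c j x := by
    intro n
    induction n using Nat.strong_induction_on with
    | _ n ih =>
      intro j hj
      refine ⟨hnb, hsum, ?_, hbound⟩
      intro i hij
      have hiv : (i : ℕ) < n := by rw [← hj]; exact hij
      have hfi := ih (i : ℕ) hiv i rfl
      have hgt := hopt i x hfi
      rw [hint i] at hgt ⊢
      have hZ : (c i : ℤ) - 1 < ∑ v ∈ D, f i v := by exact_mod_cast hgt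
      exact_mod_cast (by omega : (c i : ℤ) ≤ ∑ v ∈ D, f i v)
  obtain ⟨j, hj⟩ := hinfeas
  exact hj x (feas (j : ℕ) j rfl)
end
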